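/- arXiv:1001.5142 — 8 statements merged into one kernel-verified Lean document; each statement's English description precedes it below -/
import Mathlib

section
/- Let α ∈ (0,2], let d be a positive integer, and let Λ be a measure on ℝ^d that is finite on bounded sets. Suppose there exist constants H ≥ 0, C ≥ 0 and ε > 0 such that |t^{-α} Λ(B(0,t)) − H| ≤ C t^{-ε} for every t ≥ 1, where B(0,t) is the closed ball of radius t centred at the origin. Let q : [0,∞) → [0,∞) be a nonincreasing function with q(0) < ∞ and ∫_0^∞ q(r) r^{α−1} dr < ∞. Then lim_{t→∞} t^{-1} ∫_{ℝ^d} q(t^{-1/α} |x|) Λ(dx) = H · α ∫_0^∞ q(r) r^{α−1} dr. -/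
/-!
By the layer cake formula, `∫ φ (c ‖x‖) dΛ = ∫₀^∞ Λ {x | s < φ (c ‖x‖)} ds`. For antitone `φ`
the set `{r ≥ 0 | s < φ r}` is an interval with right end point `ρ s`, so the superlevel set
`{x | s < φ (c ‖x‖)}` lies between the closed balls of radius `c⁻¹ R` (`R < ρ s`) and `c⁻¹ ρ s`.
With `c = t^(-1/α)`, the growth `Λ (B(0, u)) ~ H u^α` gives `t⁻¹ Λ {…} → H (ρ s)^α` for every
`s > 0`, while `Λ (B(0, u)) ≤ K u^α` for `u ≥ 1` provides an integrable majorant, so dominated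
convergence applies. The limit is identified by the layer cake formula for `φ` with respect to
the measure `α r^(α-1) dr`, under which `{φ > s}` has mass `(ρ s)^α`:
`∫₀^∞ (ρ s)^α ds = α ∫₀^∞ φ r r^(α-1) dr`.
-/

open MeasureTheory Filter Set Metric Topology

/-- For antitone `φ`, `{r ≥ 0 | s < φ r}` is `[0, ρ)` or `[0, ρ]` with `ρ = superlevelRadius φ s`;
when this set is empty (i.e. `φ 0 ≤ s`), `sSup ∅ = 0` gives `ρ = 0`. -/
noncomputable def superlevelRadius (φ : ℝ → ℝ) (s : ℝ) : ℝ :=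
  sSup {r | 0 ≤ r ∧ s < φ r}

section SuperlevelRadius

variable {φ : ℝ → ℝ} {r s β : ℝ}

lemma superlevelRadius_nonneg (φ : ℝ → ℝ) (s : ℝ) : 0 ≤ superlevelRadius φ s :=
  Real.sSup_nonneg fun _ hr => hr.1

lemma bddAbove_superlevel (hφ : Antitone φ) (hs : 0 < s)
    (hint : IntegrableOn (fun r => φ r * r ^ β) (Ioi 0)) :
    BddAbove {r | 0 ≤ r ∧ s < φ r} := by
  by_contra hunbdd
  have hle : ∀ r ∈ Ioi (0 : ℝ), s ≤ φ r := fun r _ => by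
    obtain ⟨r', hr', hrr'⟩ := not_bddAbove_iff.mp hunbdd r
    exact (hr'.2.trans_le (hφ hrr'.le)).le
  have hconst : IntegrableOn (fun r : ℝ => s * r ^ β) (Ioi 0) := by
    refine hint.mono' (by fun_prop) ?_
    filter_upwards [ae_restrict_mem measurableSet_Ioi] with r hr
    have hpow : 0 ≤ r ^ β := Real.rpow_nonneg (le_of_lt hr) β
    rw [Real.norm_of_nonneg (by positivity)]
    exact mul_le_mul_of_nonneg_right (hle r hr) hpow
  have hrpow := hconst.const_mul s⁻¹
  simp only [← mul_assoc, inv_mul_cancel₀ hs.ne', one_mul] at hrpow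
  exact not_integrableOn_Ioi_rpow β hrpow

lemma superlevelRadius_eq_zero (h : ∀ r, 0 ≤ r → φ r ≤ s) : superlevelRadius φ s = 0 := by
  have hemp : {r | 0 ≤ r ∧ s < φ r} = ∅ :=
    eq_empty_of_forall_notMem fun r hr => (h r hr.1).not_gt hr.2
  rw [superlevelRadius, hemp, Real.sSup_empty]

lemma lt_of_lt_superlevelRadius (hφ : Antitone φ) (hr : 0 ≤ r)
    (h : r < superlevelRadius φ s) : s < φ r := by
  have hne : {r | 0 ≤ r ∧ s < φ r}.Nonempty := by
    by_contra hemp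
    rw [superlevelRadius, not_nonempty_iff_eq_empty.mp hemp, Real.sSup_empty] at h
    linarith
  obtain ⟨r', hr', hrr'⟩ := exists_lt_of_lt_csSup hne h
  exact hr'.2.trans_le (hφ hrr'.le)

lemma le_superlevelRadius (hbdd : BddAbove {r | 0 ≤ r ∧ s < φ r}) (hr : 0 ≤ r) (h : s < φ r) :
    r ≤ superlevelRadius φ s :=
  le_csSup hbdd ⟨hr, h⟩

lemma antitoneOn_superlevelRadius (hφ : Antitone φ)
    (hint : IntegrableOn (fun r => φ r * r ^ β) (Ioi 0)) :
    AntitoneOn (superlevelRadius φ) (Ioi 0) := by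
  intro a ha b _ hab
  rcases {r | 0 ≤ r ∧ b < φ r}.eq_empty_or_nonempty with hemp | hne
  · rw [superlevelRadius, hemp, Real.sSup_empty]
    exact superlevelRadius_nonneg φ a
  · exact csSup_le_csSup (bddAbove_superlevel hφ ha hint) hne
      fun r hr => ⟨hr.1, hab.trans_lt hr.2⟩

lemma setLIntegral_Ioc_ofReal_mul_rpow (hβ : 0 < β) {a : ℝ} (ha : 0 ≤ a) :
    ∫⁻ r in Ioc 0 a, ENNReal.ofReal (β * r ^ (β - 1)) = ENNReal.ofReal (a ^ β) := by
  have hint : IntegrableOn (fun r : ℝ => β * r ^ (β - 1)) (Ioc 0 a) :=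
    ((intervalIntegrable_iff_integrableOn_Ioc_of_le ha).mp
      (intervalIntegral.intervalIntegrable_rpow' (by linarith))).const_mul β
  rw [← ofReal_integral_eq_lintegral_ofReal hint, ← intervalIntegral.integral_of_le ha,
    intervalIntegral.integral_const_mul, integral_rpow (Or.inl (by linarith)), sub_add_cancel,
    Real.zero_rpow hβ.ne', sub_zero, mul_div_cancel₀ _ hβ.ne']
  filter_upwards [ae_restrict_mem measurableSet_Ioc] with r hr
  have := hr.1
  positivity

lemma withDensity_superlevel_eq (hφ : Antitone φ) (hβ : 0 < β)
    (hbdd : BddAbove {r | 0 ≤ r ∧ s < φ r}) :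
    (volume.restrict (Ioi 0)).withDensity (fun r => ENNReal.ofReal (β * r ^ (β - 1)))
      {r | s < φ r} = ENNReal.ofReal (superlevelRadius φ s ^ β) := by
  have hmeas : MeasurableSet {r | s < φ r} := measurableSet_lt measurable_const hφ.measurable
  have hIoc := setLIntegral_Ioc_ofReal_mul_rpow hβ (superlevelRadius_nonneg φ s)
  rw [withDensity_apply _ hmeas, Measure.restrict_restrict hmeas]
  apply le_antisymm
  · rw [← hIoc]
    exact lintegral_mono_set fun r ⟨hr, hr0⟩ =>
      ⟨hr0, le_superlevelRadius hbdd (le_of_lt hr0) hr⟩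
  · rw [← hIoc, ← Measure.restrict_congr_set Ioo_ae_eq_Ioc]
    exact lintegral_mono_set fun r hr => ⟨lt_of_lt_superlevelRadius hφ hr.1.le hr.2, hr.1⟩

lemma lintegral_superlevelRadius_rpow (hφ : Antitone φ) (hφ0 : ∀ r, 0 ≤ φ r) (hβ : 0 < β)
    (hint : IntegrableOn (fun r => φ r * r ^ (β - 1)) (Ioi 0)) :
    ∫⁻ s in Ioi 0, ENNReal.ofReal (superlevelRadius φ s ^ β)
      = ENNReal.ofReal (β * ∫ r in Ioi 0, φ r * r ^ (β - 1)) := by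
  have hcake := lintegral_eq_lintegral_meas_lt
    ((volume.restrict (Ioi 0)).withDensity fun r => ENNReal.ofReal (β * r ^ (β - 1)))
    (ae_of_all _ hφ0) hφ.measurable.aemeasurable
  rw [setLIntegral_congr_fun measurableSet_Ioi fun s hs =>
      (withDensity_superlevel_eq hφ hβ (bddAbove_superlevel hφ hs hint)).symm, ← hcake,
    lintegral_withDensity_eq_lintegral_mul _ (by fun_prop) hφ.measurable.ennreal_ofReal,
    ← integral_const_mul, ofReal_integral_eq_lintegral_ofReal (hint.const_mul β)]
  · refine setLIntegral_congr_fun measurableSet_Ioi fun r hr => ?_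
    have : 0 ≤ r ^ (β - 1) := Real.rpow_nonneg (le_of_lt hr) _
    rw [Pi.mul_apply, ← ENNReal.ofReal_mul (by positivity)]
    ring_nf
  · filter_upwards [ae_restrict_mem measurableSet_Ioi] with r hr
    have : 0 ≤ r ^ (β - 1) := Real.rpow_nonneg (le_of_lt hr) _
    have := hφ0 r
    positivity

lemma integrableOn_superlevelRadius_rpow (hφ : Antitone φ) (hφ0 : ∀ r, 0 ≤ φ r) (hβ : 0 < β)
    (hint : IntegrableOn (fun r => φ r * r ^ (β - 1)) (Ioi 0)) :
    IntegrableOn (fun s => superlevelRadius φ s ^ β) (Ioi 0) := by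
  refine ⟨((aemeasurable_restrict_of_antitoneOn measurableSet_Ioi
    (antitoneOn_superlevelRadius hφ hint)).pow_const β).aestronglyMeasurable, ?_⟩
  rw [hasFiniteIntegral_iff_ofReal
    (ae_of_all _ fun s => Real.rpow_nonneg (superlevelRadius_nonneg φ s) β),
    lintegral_superlevelRadius_rpow hφ hφ0 hβ hint]
  exact ENNReal.ofReal_lt_top

lemma integral_superlevelRadius_rpow (hφ : Antitone φ) (hφ0 : ∀ r, 0 ≤ φ r) (hβ : 0 < β)
    (hint : IntegrableOn (fun r => φ r * r ^ (β - 1)) (Ioi 0)) :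
    ∫ s in Ioi 0, superlevelRadius φ s ^ β = β * ∫ r in Ioi 0, φ r * r ^ (β - 1) := by
  have hnonneg : 0 ≤ β * ∫ r in Ioi 0, φ r * r ^ (β - 1) :=
    mul_nonneg hβ.le <| setIntegral_nonneg measurableSet_Ioi fun r hr =>
      mul_nonneg (hφ0 r) (Real.rpow_nonneg (le_of_lt hr) _)
  rw [integral_eq_lintegral_of_nonneg_ae
      (ae_of_all _ fun s => Real.rpow_nonneg (superlevelRadius_nonneg φ s) β)
      (integrableOn_superlevelRadius_rpow hφ hφ0 hβ hint).aestronglyMeasurable,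
    lintegral_superlevelRadius_rpow hφ hφ0 hβ hint, ENNReal.toReal_ofReal hnonneg]

end SuperlevelRadius

section GrowthProfile

variable {F : ℝ → ℝ} {α H K t R : ℝ}

lemma rpow_one_div_mul_rpow (hα : α ≠ 0) (ht : 0 ≤ t) (hR : 0 ≤ R) :
    (t ^ (1 / α) * R) ^ α = t * R ^ α := by
  rw [Real.mul_rpow (Real.rpow_nonneg ht _) hR, ← Real.rpow_mul ht, one_div_mul_cancel hα,
    Real.rpow_one]

lemma tendsto_inv_mul_comp_rpow_mul (hα : 0 < α)
    (hF : Tendsto (fun u => u ^ (-α) * F u) atTop (𝓝 H)) (hR : 0 < R) :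
    Tendsto (fun t => t⁻¹ * F (t ^ (1 / α) * R)) atTop (𝓝 (H * R ^ α)) := by
  have hscale : Tendsto (fun t : ℝ => t ^ (1 / α) * R) atTop atTop :=
    (tendsto_rpow_atTop (by positivity)).atTop_mul_const hR
  refine ((hF.comp hscale).mul_const (R ^ α)).congr' ?_
  filter_upwards [eventually_gt_atTop 0] with t ht
  have hRα : 0 < R ^ α := Real.rpow_pos_of_pos hR α
  rw [Function.comp_apply, Real.rpow_neg (by positivity),
    rpow_one_div_mul_rpow hα.ne' ht.le hR.le]
  field_simp

lemma Monotone.exists_le_mul_rpow (hmono : Monotone F) (hF0 : ∀ u, 0 ≤ F u) (hα : 0 ≤ α)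
    (hF : Tendsto (fun u => u ^ (-α) * F u) atTop (𝓝 H)) :
    ∃ K, ∀ u, 1 ≤ u → F u ≤ K * u ^ α := by
  obtain ⟨u₀, hu₀⟩ := eventually_atTop.mp (hF.eventually (gt_mem_nhds (lt_add_one H)))
  refine ⟨max (H + 1) (F u₀), fun u hu => ?_⟩
  have hpow : 1 ≤ u ^ α := Real.one_le_rpow hu hα
  rcases le_total u₀ u with hle | hle
  · have hlt := hu₀ u hle
    rw [Real.rpow_neg (by linarith), inv_mul_lt_iff₀ (by positivity)] at hlt
    calc F u ≤ u ^ α * (H + 1) := hlt.le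
      _ ≤ max (H + 1) (F u₀) * u ^ α := by rw [mul_comm]; gcongr; exact le_max_left _ _
  · calc F u ≤ F u₀ := hmono hle
      _ ≤ max (H + 1) (F u₀) := le_max_right _ _
      _ ≤ max (H + 1) (F u₀) * u ^ α :=
        le_mul_of_one_le_right ((hF0 u₀).trans (le_max_right _ _)) hpow

lemma inv_mul_comp_rpow_mul_le (hmono : Monotone F) (hF0 : ∀ u, 0 ≤ F u) (hα : 0 < α)
    (hK : ∀ u, 1 ≤ u → F u ≤ K * u ^ α) (ht : 1 ≤ t) (hR : 0 ≤ R) :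
    t⁻¹ * F (t ^ (1 / α) * R) ≤ K * (R ^ α + 1) := by
  have hK1 : F 1 ≤ K := by simpa using hK 1 le_rfl
  have hK0 : 0 ≤ K := (hF0 1).trans hK1
  have hRα : 0 ≤ R ^ α := Real.rpow_nonneg hR α
  rcases le_total 1 (t ^ (1 / α) * R) with hu | hu
  · calc t⁻¹ * F (t ^ (1 / α) * R) ≤ t⁻¹ * (K * (t ^ (1 / α) * R) ^ α) := by
          gcongr; exact hK _ hu
      _ = K * R ^ α := by
          rw [rpow_one_div_mul_rpow hα.ne' (by linarith) hR]; field_simp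
      _ ≤ K * (R ^ α + 1) := by gcongr; linarith
  · calc t⁻¹ * F (t ^ (1 / α) * R) ≤ 1 * F 1 :=
          mul_le_mul (inv_le_one_of_one_le₀ ht) (hmono hu) (hF0 _) zero_le_one
      _ ≤ K * (R ^ α + 1) := by
          rw [one_mul]; exact hK1.trans (le_mul_of_one_le_right hK0 (by linarith))

end GrowthProfile

lemma tendsto_of_forall_lt_le {ι : Type*} {l : Filter ι} {a : ι → ℝ} {f : ι → ℝ → ℝ}
    {g : ℝ → ℝ} {ρ : ℝ} (hg : ContinuousAt g ρ) (hf : ∀ R, Tendsto (f · R) l (𝓝 (g R)))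
    (hlow : ∀ R < ρ, ∀ᶠ i in l, f i R ≤ a i) (hup : ∀ᶠ i in l, a i ≤ f i ρ) :
    Tendsto a l (𝓝 (g ρ)) := by
  refine tendsto_order.mpr ⟨fun b hb => ?_, fun b hb => ?_⟩
  · obtain ⟨R, hbR, hRρ⟩ := (((hg.eventually (lt_mem_nhds hb)).filter_mono nhdsWithin_le_nhds).and
      (self_mem_nhdsWithin : Iio ρ ∈ 𝓝[<] ρ)).exists
    filter_upwards [(hf R).eventually (lt_mem_nhds hbR), hlow R hRρ] with i h1 h2
    exact h1.trans_le h2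
  · filter_upwards [(hf ρ).eventually (gt_mem_nhds hb), hup] with i h1 h2
    exact h2.trans_lt h1

lemma integral_eq_integral_measureReal_lt {Ω : Type*} [MeasurableSpace Ω] {μ : Measure Ω}
    {f : Ω → ℝ} (hf0 : 0 ≤ᵐ[μ] f) (hf : AEMeasurable f μ)
    (hfin : ∀ s, 0 < s → μ {ω | s < f ω} ≠ ⊤) :
    ∫ ω, f ω ∂μ = ∫ s in Ioi 0, μ.real {ω | s < f ω} := by
  have hanti : Antitone fun s => μ {ω | s < f ω} :=
    fun _ _ hst => measure_mono fun _ h => hst.trans_lt h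
  rw [integral_eq_lintegral_of_nonneg_ae hf0 hf.aestronglyMeasurable,
    lintegral_eq_lintegral_meas_lt μ hf0 hf, ← integral_toReal hanti.measurable.aemeasurable]
  · rfl
  · filter_upwards [ae_restrict_mem measurableSet_Ioi] with s hs
    exact (hfin s hs).lt_top

section Radial

variable {E : Type*} [NormedAddCommGroup E] {φ : ℝ → ℝ} {α H K c s : ℝ}

lemma superlevel_subset_closedBall (hbdd : BddAbove {r | 0 ≤ r ∧ s < φ r}) (hc : 0 < c) :
    {x : E | s < φ (c * ‖x‖)} ⊆ closedBall 0 (c⁻¹ * superlevelRadius φ s) := fun x hx => by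
  rw [mem_closedBall_zero_iff, ← div_eq_inv_mul, le_div_iff₀' hc]
  exact le_superlevelRadius hbdd (by positivity) hx

lemma closedBall_subset_superlevel (hφ : Antitone φ) (hc : 0 < c) {R : ℝ}
    (hR : R < superlevelRadius φ s) : closedBall (0 : E) (c⁻¹ * R) ⊆ {x | s < φ (c * ‖x‖)} :=
  fun x hx => by
    rw [mem_closedBall_zero_iff, ← div_eq_inv_mul, le_div_iff₀' hc] at hx
    exact lt_of_lt_superlevelRadius hφ (by positivity) (hx.trans_lt hR)

variable [MeasurableSpace E] {Λ : Measure E}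

/-- Balls of negative radius are empty, so with `max R 0` the limit holds for every `R` and is
continuous in `R`. -/
lemma tendsto_inv_mul_measureReal_closedBall (hα : 0 < α)
    (hlim : Tendsto (fun u => u ^ (-α) * Λ.real (closedBall 0 u)) atTop (𝓝 H)) (R : ℝ) :
    Tendsto (fun t => t⁻¹ * Λ.real (closedBall 0 (t ^ (1 / α) * R))) atTop
      (𝓝 (H * max R 0 ^ α)) := by
  rcases lt_trichotomy R 0 with hR | rfl | hR
  · rw [max_eq_right hR.le, Real.zero_rpow hα.ne', mul_zero]
    refine tendsto_const_nhds.congr' ?_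
    filter_upwards [eventually_gt_atTop 0] with t ht
    rw [closedBall_eq_empty.mpr (mul_neg_of_pos_of_neg (by positivity) hR), measureReal_empty,
      mul_zero]
  · simpa [Real.zero_rpow hα.ne'] using tendsto_inv_atTop_zero.mul_const (Λ.real (closedBall 0 0))
  · rw [max_eq_left hR.le]
    exact tendsto_inv_mul_comp_rpow_mul hα hlim hR

lemma measure_superlevel_ne_top (hΛ : ∀ R, Λ (closedBall 0 R) ≠ ⊤)
    (hbdd : BddAbove {r | 0 ≤ r ∧ s < φ r}) (hc : 0 < c) : Λ {x | s < φ (c * ‖x‖)} ≠ ⊤ :=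
  ((measure_mono (superlevel_subset_closedBall hbdd hc)).trans_lt (hΛ _).lt_top).ne

lemma tendsto_inv_mul_measureReal_superlevel (hα : 0 < α)
    (hΛ : ∀ R, Λ (closedBall 0 R) ≠ ⊤)
    (hlim : Tendsto (fun u => u ^ (-α) * Λ.real (closedBall 0 u)) atTop (𝓝 H))
    (hφ : Antitone φ) (hbdd : BddAbove {r | 0 ≤ r ∧ s < φ r}) :
    Tendsto (fun t => t⁻¹ * Λ.real {x | s < φ (t ^ (-(1 / α)) * ‖x‖)}) atTop
      (𝓝 (H * superlevelRadius φ s ^ α)) := by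
  have hρ : max (superlevelRadius φ s) 0 = superlevelRadius φ s :=
    max_eq_left (superlevelRadius_nonneg φ s)
  have hscale : ∀ᶠ t : ℝ in atTop, 0 < t ^ (-(1 / α)) ∧ (t ^ (-(1 / α)))⁻¹ = t ^ (1 / α) := by
    filter_upwards [eventually_gt_atTop 0] with t ht
    exact ⟨Real.rpow_pos_of_pos ht _, by rw [Real.rpow_neg ht.le, inv_inv]⟩
  suffices h : Tendsto (fun t => t⁻¹ * Λ.real {x | s < φ (t ^ (-(1 / α)) * ‖x‖)}) atTop
      (𝓝 (H * max (superlevelRadius φ s) 0 ^ α)) by rwa [hρ] at h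
  refine tendsto_of_forall_lt_le (g := fun R => H * max R 0 ^ α)
    (by have := hα.le; fun_prop)
    (tendsto_inv_mul_measureReal_closedBall hα hlim) (fun R hR => ?_) ?_
  · filter_upwards [hscale, eventually_gt_atTop 0] with t ⟨hc, hinv⟩ ht
    rw [← hinv]
    exact mul_le_mul_of_nonneg_left (measureReal_mono (closedBall_subset_superlevel hφ hc
      (hρ ▸ hR)) (measure_superlevel_ne_top hΛ hbdd hc)) (inv_nonneg.mpr ht.le)
  · filter_upwards [hscale, eventually_gt_atTop 0] with t ⟨hc, hinv⟩ ht
    rw [← hinv]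
    exact mul_le_mul_of_nonneg_left (measureReal_mono (superlevel_subset_closedBall hbdd hc)
      (hΛ _)) (inv_nonneg.mpr ht.le)

lemma monotone_measureReal_closedBall (hΛ : ∀ R, Λ (closedBall 0 R) ≠ ⊤) :
    Monotone fun R => Λ.real (closedBall 0 R) :=
  fun _ b hab => measureReal_mono (closedBall_subset_closedBall hab) (hΛ b)

lemma inv_mul_measureReal_superlevel_le (hα : 0 < α) (hΛ : ∀ R, Λ (closedBall 0 R) ≠ ⊤)
    (hK : ∀ u, 1 ≤ u → Λ.real (closedBall 0 u) ≤ K * u ^ α) (hφ : Antitone φ)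
    (hbdd : BddAbove {r | 0 ≤ r ∧ s < φ r}) {t : ℝ} (ht : 1 ≤ t) :
    t⁻¹ * Λ.real {x | s < φ (t ^ (-(1 / α)) * ‖x‖)}
      ≤ K * (superlevelRadius φ s ^ α + (Iio (φ 0)).indicator 1 s) := by
  have ht0 : 0 < t := by linarith
  have hc : 0 < t ^ (-(1 / α)) := Real.rpow_pos_of_pos ht0 _
  by_cases hs : s < φ 0
  · rw [indicator_of_mem (mem_Iio.mpr hs), Pi.one_apply]
    calc t⁻¹ * Λ.real {x | s < φ (t ^ (-(1 / α)) * ‖x‖)}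
        ≤ t⁻¹ * Λ.real (closedBall 0 (t ^ (1 / α) * superlevelRadius φ s)) := by
          rw [← inv_inv (t ^ (1 / α)), ← Real.rpow_neg ht0.le]
          exact mul_le_mul_of_nonneg_left
            (measureReal_mono (superlevel_subset_closedBall hbdd hc) (hΛ _)) (inv_nonneg.mpr ht0.le)
      _ ≤ K * (superlevelRadius φ s ^ α + 1) :=
          inv_mul_comp_rpow_mul_le (monotone_measureReal_closedBall hΛ)
            (fun _ => measureReal_nonneg) hα hK ht (superlevelRadius_nonneg φ s)
  · have hempty : {x : E | s < φ (t ^ (-(1 / α)) * ‖x‖)} = ∅ :=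
      eq_empty_of_forall_notMem fun x hx => hs (hx.trans_le (hφ (by positivity)))
    rw [hempty, measureReal_empty, mul_zero, indicator_of_notMem (mt mem_Iio.mp hs),
      superlevelRadius_eq_zero fun r hr => (hφ hr).trans (not_lt.mp hs),
      Real.zero_rpow hα.ne', add_zero, mul_zero]

theorem tendsto_inv_mul_integral_radial [OpensMeasurableSpace E] (hα : 0 < α)
    (hΛ : ∀ R, Λ (closedBall 0 R) ≠ ⊤)
    (hlim : Tendsto (fun u => u ^ (-α) * Λ.real (closedBall 0 u)) atTop (𝓝 H))
    (hφ : Antitone φ) (hφ0 : ∀ r, 0 ≤ φ r)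
    (hint : IntegrableOn (fun r => φ r * r ^ (α - 1)) (Ioi 0)) :
    Tendsto (fun t => t⁻¹ * ∫ x, φ (t ^ (-(1 / α)) * ‖x‖) ∂Λ) atTop
      (𝓝 (H * (α * ∫ r in Ioi 0, φ r * r ^ (α - 1)))) := by
  have hbdd : ∀ s ∈ Ioi (0 : ℝ), BddAbove {r | 0 ≤ r ∧ s < φ r} :=
    fun _ hs => bddAbove_superlevel hφ hs hint
  obtain ⟨K, hK⟩ := (monotone_measureReal_closedBall hΛ).exists_le_mul_rpow
    (fun _ => measureReal_nonneg) hα.le hlim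
  have hlayer : (fun t => ∫ s in Ioi 0, t⁻¹ * Λ.real {x | s < φ (t ^ (-(1 / α)) * ‖x‖)})
      =ᶠ[atTop] fun t => t⁻¹ * ∫ x, φ (t ^ (-(1 / α)) * ‖x‖) ∂Λ := by
    filter_upwards [eventually_gt_atTop 0] with t ht
    rw [integral_eq_integral_measureReal_lt (f := fun x => φ (t ^ (-(1 / α)) * ‖x‖))
      (ae_of_all _ fun _ => hφ0 _) (hφ.measurable.comp (by fun_prop)).aemeasurable
      fun s hs => measure_superlevel_ne_top hΛ (hbdd s hs) (Real.rpow_pos_of_pos ht _),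
      integral_const_mul]
  have hdom : IntegrableOn (fun s => K * (superlevelRadius φ s ^ α + (Iio (φ 0)).indicator 1 s))
      (Ioi 0) := by
    refine ((integrableOn_superlevelRadius_rpow hφ hφ0 hα hint).add ?_).const_mul K
    refine (integrable_indicator_iff measurableSet_Iio).mpr (integrableOn_const ?_)
    rw [Measure.restrict_apply measurableSet_Iio, Iio_inter_Ioi]
    exact measure_Ioo_lt_top.ne
  rw [← integral_superlevelRadius_rpow hφ hφ0 hα hint, ← integral_const_mul]
  refine (tendsto_integral_filter_of_dominated_convergence _ ?_ ?_ hdom ?_).congr' hlayer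
  · refine Eventually.of_forall fun t => (Measurable.const_mul ?_ _).aestronglyMeasurable
    have hanti : Antitone fun s : ℝ => Λ {x | s < φ (t ^ (-(1 / α)) * ‖x‖)} :=
      fun _ _ hst => measure_mono fun _ h => hst.trans_lt h
    exact hanti.measurable.ennreal_toReal
  · filter_upwards [eventually_ge_atTop 1] with t ht
    filter_upwards [ae_restrict_mem measurableSet_Ioi] with s hs
    rw [Real.norm_of_nonneg (mul_nonneg (inv_nonneg.mpr (by linarith)) measureReal_nonneg)]
    exact inv_mul_measureReal_superlevel_le hα hΛ hK hφ (hbdd s hs) ht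
  · filter_upwards [ae_restrict_mem measurableSet_Ioi] with s hs
    exact tendsto_inv_mul_measureReal_superlevel hα hΛ hlim hφ (hbdd s hs)

end Radial

theorem stmt0_general
    (d : ℕ) (α : ℝ) (hα : α ∈ Set.Ioc (0:ℝ) 2)
    (Λ : Measure (EuclideanSpace ℝ (Fin d)))
    (hΛ : ∀ s : Set (EuclideanSpace ℝ (Fin d)), Bornology.IsBounded s → Λ s < ⊤)
    (H C ε : ℝ) (hε : 0 < ε)
    (hball : ∀ t : ℝ, 1 ≤ t →
      |t ^ (-α) * (Λ (Metric.closedBall 0 t)).toReal - H| ≤ C * t ^ (-ε))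
    (q : ℝ → ℝ) (hq0 : ∀ r, 0 ≤ q r) (hq : AntitoneOn q (Set.Ici 0))
    (hint : IntegrableOn (fun r => q r * r ^ (α - 1)) (Set.Ioi 0)) :
    Tendsto (fun t : ℝ => t⁻¹ * ∫ x, q (t ^ (-(1/α)) * ‖x‖) ∂Λ) atTop
      (nhds (H * (α * ∫ r in Set.Ioi (0:ℝ), q r * r ^ (α - 1)))) := by
  set φ : ℝ → ℝ := fun r => q (max r 0)
  have hφq : EqOn φ q (Ici 0) := fun r hr => congrArg q (max_eq_left hr)
  have hφ : Antitone φ := fun a b hab =>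
    hq (le_max_right a 0) (le_max_right b 0) (max_le_max_right 0 hab)
  have hlim : Tendsto (fun u => u ^ (-α) * Λ.real (closedBall 0 u)) atTop (𝓝 H) := by
    refine tendsto_iff_dist_tendsto_zero.mpr (squeeze_zero' (Eventually.of_forall fun _ =>
      dist_nonneg) ?_ (by simpa using (tendsto_rpow_neg_atTop hε).const_mul C))
    filter_upwards [eventually_ge_atTop 1] with u hu
    exact hball u hu
  have hintφ : IntegrableOn (fun r => φ r * r ^ (α - 1)) (Ioi 0) :=
    hint.congr_fun (fun r hr => by rw [hφq (Ioi_subset_Ici_self hr)]) measurableSet_Ioi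
  have hφlim := tendsto_inv_mul_integral_radial hα.1 (fun R => (hΛ _ isBounded_closedBall).ne)
    hlim hφ (fun _ => hq0 _) hintφ
  rw [setIntegral_congr_fun measurableSet_Ioi fun r hr => by
    rw [hφq (Ioi_subset_Ici_self hr)]] at hφlim
  refine hφlim.congr' ?_
  filter_upwards [eventually_ge_atTop 0] with t ht
  exact congrArg (t⁻¹ * ·) (integral_congr_ae (ae_of_all _ fun x =>
    hφq (mul_nonneg (Real.rpow_nonneg ht _) (norm_nonneg x))))

theorem stmt0
    (d : ℕ) (hd : 0 < d) (α : ℝ) (hα : α ∈ Set.Ioc (0:ℝ) 2)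
    (Λ : Measure (EuclideanSpace ℝ (Fin d)))
    (hΛ : ∀ s : Set (EuclideanSpace ℝ (Fin d)), Bornology.IsBounded s → Λ s < ⊤)
    (H C ε : ℝ) (hH : 0 ≤ H) (hC : 0 ≤ C) (hε : 0 < ε)
    (hball : ∀ t : ℝ, 1 ≤ t →
      |t ^ (-α) * (Λ (Metric.closedBall 0 t)).toReal - H| ≤ C * t ^ (-ε))
    (q : ℝ → ℝ) (hq0 : ∀ r, 0 ≤ q r) (hq : AntitoneOn q (Set.Ici 0))
    (hint : IntegrableOn (fun r => q r * r ^ (α - 1)) (Set.Ioi 0)) :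
    Tendsto (fun t : ℝ => t⁻¹ * ∫ x, q (t ^ (-(1/α)) * ‖x‖) ∂Λ) atTop
      (nhds (H * (α * ∫ r in Set.Ioi (0:ℝ), q r * r ^ (α - 1)))) :=
  stmt0_general d α hα Λ hΛ H C ε hε hball q hq0 hq hint
end

section
/- Let h ∈ (1,2), A > 0 and B > 0. Define C_h(s,t) = s^h + t^h − (1/2)[(s+t)^h + |s−t|^h], c_h(s,t) = (s+t)^h − s^h − t^h, and e(s,t) = A·C_h(s,t) + B·c_h(s,t). Fix 0 ≤ u < v ≤ s < t and define R(τ) = e(v, t+τ) − e(v, s+τ) − e(u, t+τ) + e(u, s+τ) for τ > 0. Then lim_{τ→∞} τ^{2−h} R(τ) = B · h(h−1)(v−u)(t−s); in particular R(τ) decays at the polynomial rate τ^{h−2}. -/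
/-!
In the increment the one-variable terms `s ^ h`, `t ^ h` cancel. What remains are two second
differences `(τ + a) ^ h - (τ + b) ^ h - (τ + c) ^ h + (τ + d) ^ h` with `a + d = b + c`: one in
the sum variables, from `(s + t) ^ h`, with weight `B - A / 2`, and, once `τ` is large enough to
drop the absolute values, one in the difference variables, from `|s - t| ^ h`, with weight
`-A / 2`. Writing `x = τ⁻¹`, such a second difference times `τ ^ (2 - h)` is the second difference
of `y ↦ (1 + y) ^ h` at scales `a x, b x, c x, d x` divided by `x ^ 2`, which tends to
`h (h - 1) (a² + d² - b² - c²) / 2` by L'Hôpital. The two contributions of `A` then cancel.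
-/

open Filter

/-- Covariance of the sub-fractional Brownian motion. -/
noncomputable def subCov (h s t : ℝ) : ℝ :=
  s ^ h + t ^ h - (1/2) * ((s + t) ^ h + |s - t| ^ h)

/-- The second covariance kernel `c_h` (for `h > 1`, without the sign). -/
noncomputable def cCov (h s t : ℝ) : ℝ := (s + t) ^ h - s ^ h - t ^ h

/-- Covariance of the limit Gaussian process. -/
noncomputable def eCov (h A B s t : ℝ) : ℝ := A * subCov h s t + B * cCov h s t

open Topology

theorem HasDerivAt.comp_const_mul {φ : ℝ → ℝ} {φ' k x : ℝ} (hφ : HasDerivAt φ φ' (k * x)) :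
    HasDerivAt (fun x => φ (k * x)) (k * φ') x := by
  have hk : HasDerivAt (fun x : ℝ => k * x) k x := by
    simpa using (hasDerivAt_id x).const_mul k
  exact (hφ.comp x hk).congr_deriv (mul_comm _ _)

/-- The weights `a, -b, -c, d` with `a + d = b + c` annihilate constants and linear functions,
so the combination sees only the second-order Taylor term of `φ` at `0`. -/
theorem tendsto_second_difference_div_sq {φ φ' : ℝ → ℝ} {φ₂ a b c d : ℝ}
    (hφ : ∀ᶠ y in 𝓝 0, HasDerivAt φ (φ' y) y) (hφ' : HasDerivAt φ' φ₂ 0)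
    (hsum : a + d = b + c) :
    Tendsto (fun x => (φ (a * x) - φ (b * x) - φ (c * x) + φ (d * x)) / x ^ 2) (𝓝[≠] 0)
      (𝓝 (φ₂ * (a ^ 2 + d ^ 2 - b ^ 2 - c ^ 2) / 2)) := by
  have hscale (k : ℝ) : ∀ᶠ x in 𝓝 0, HasDerivAt (fun x => φ (k * x)) (k * φ' (k * x)) x := by
    have hk : Tendsto (fun x : ℝ => k * x) (𝓝 0) (𝓝 0) := by
      simpa using (tendsto_id (x := 𝓝 (0 : ℝ))).const_mul k
    filter_upwards [hk.eventually hφ] with x hx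
    exact hx.comp_const_mul
  have hscale' (k : ℝ) : HasDerivAt (fun x => k * φ' (k * x)) (k ^ 2 * φ₂) 0 := by
    have : HasDerivAt φ' φ₂ (k * 0) := by rwa [mul_zero]
    exact (this.comp_const_mul.const_mul k).congr_deriv (by ring)
  set f' := fun x => a * φ' (a * x) - b * φ' (b * x) - c * φ' (c * x) + d * φ' (d * x)
  have hf'0 : f' 0 = 0 := by
    simp only [f', mul_zero]
    linear_combination φ' 0 * hsum
  have hf' : HasDerivAt f' (φ₂ * (a ^ 2 + d ^ 2 - b ^ 2 - c ^ 2)) 0 :=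
    ((((hscale' a).sub (hscale' b)).sub (hscale' c)).add (hscale' d)).congr_deriv (by ring)
  refine HasDerivAt.lhopital_zero_nhdsNE (f' := f') (g' := fun x => 2 * x) ?_ ?_ ?_ ?_ ?_ ?_
  · filter_upwards [nhdsWithin_le_nhds ((((hscale a).and (hscale b)).and (hscale c)).and (hscale d))]
      with x ⟨⟨⟨ha, hb⟩, hc⟩, hd⟩
    exact ((ha.sub hb).sub hc).add hd
  · filter_upwards with x
    simpa using hasDerivAt_pow 2 x
  · filter_upwards [self_mem_nhdsWithin] with x hx
    simpa using hx
  · have hcont (k : ℝ) : ContinuousAt (fun x => φ (k * x)) 0 :=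
      (hscale k).self_of_nhds.continuousAt
    have hf : ContinuousAt (fun x => φ (a * x) - φ (b * x) - φ (c * x) + φ (d * x)) 0 :=
      (((hcont a).sub (hcont b)).sub (hcont c)).add (hcont d)
    simpa using hf.tendsto.mono_left nhdsWithin_le_nhds
  · exact ((continuous_pow 2).tendsto' 0 0 (by simp)).mono_left nhdsWithin_le_nhds
  · refine ((hasDerivAt_iff_tendsto_slope.mp hf').div_const 2).congr'
      (eventually_of_mem self_mem_nhdsWithin fun x _ => ?_)
    rw [slope_def_field, hf'0, sub_zero, sub_zero, div_div, mul_comm]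

theorem tendsto_one_add_rpow_second_difference_div_sq (h : ℝ) {a b c d : ℝ}
    (hsum : a + d = b + c) :
    Tendsto (fun x => ((1 + a * x) ^ h - (1 + b * x) ^ h - (1 + c * x) ^ h + (1 + d * x) ^ h)
        / x ^ 2) (𝓝[≠] 0) (𝓝 (h * (h - 1) * (a ^ 2 + d ^ 2 - b ^ 2 - c ^ 2) / 2)) := by
  have hpos : ∀ᶠ y : ℝ in 𝓝 0, 0 < 1 + y :=
    (eventually_gt_nhds (by norm_num : (-1 : ℝ) < 0)).mono fun y hy => by linarith
  have hderiv (e y : ℝ) (hy : 0 < 1 + y) :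
      HasDerivAt (fun y : ℝ => (1 + y) ^ e) (e * (1 + y) ^ (e - 1)) y := by
    have h1 : HasDerivAt (fun y : ℝ => 1 + y) 1 y := (hasDerivAt_id y).const_add 1
    exact (h1.rpow_const (p := e) (Or.inl hy.ne')).congr_deriv (by ring)
  have hφ : ∀ᶠ y in 𝓝 0, HasDerivAt (fun y : ℝ => (1 + y) ^ h) (h * (1 + y) ^ (h - 1)) y :=
    hpos.mono fun y hy => hderiv h y hy
  have hφ' : HasDerivAt (fun y : ℝ => h * (1 + y) ^ (h - 1)) (h * (h - 1)) 0 := by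
    refine ((hderiv (h - 1) 0 (by norm_num)).const_mul h).congr_deriv ?_
    simp
  exact (tendsto_second_difference_div_sq hφ hφ' hsum :)

theorem tendsto_rpow_second_difference_atTop (h : ℝ) {a b c d : ℝ} (hsum : a + d = b + c) :
    Tendsto (fun τ : ℝ => τ ^ (2 - h) * ((τ + a) ^ h - (τ + b) ^ h - (τ + c) ^ h + (τ + d) ^ h))
      atTop (𝓝 (h * (h - 1) * (a ^ 2 + d ^ 2 - b ^ 2 - c ^ 2) / 2)) := by
  have hinv : Tendsto (fun τ : ℝ => τ⁻¹) atTop (𝓝[≠] 0) :=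
    tendsto_inv_atTop_nhdsGT_zero.mono_right (nhdsWithin_mono 0 fun x hx => ne_of_gt hx)
  refine ((tendsto_one_add_rpow_second_difference_div_sq h hsum).comp hinv).congr' ?_
  filter_upwards [eventually_gt_atTop 0, eventually_ge_atTop (-a), eventually_ge_atTop (-b),
    eventually_ge_atTop (-c), eventually_ge_atTop (-d)] with τ hτ ha hb hc hd
  have hshift (e : ℝ) (he : -e ≤ τ) : (1 + e * τ⁻¹) ^ h = (τ + e) ^ h / τ ^ h := by
    rw [← Real.div_rpow (by linarith) hτ.le]
    field_simp
  have hpow : τ ^ (2 - h) = τ ^ 2 / τ ^ h := by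
    rw [Real.rpow_sub hτ, Real.rpow_two]
  simp only [Function.comp, hshift a ha, hshift b hb, hshift c hc, hshift d hd, hpow]
  field_simp

theorem eventually_abs_sub_add_eq (x y : ℝ) : ∀ᶠ τ in atTop, |x - (y + τ)| = τ + (y - x) :=
  (eventually_ge_atTop (x - y)).mono fun τ hτ => by
    rw [abs_of_nonpos (by linarith)]
    ring

theorem eventually_eCov_increment_eq (h A B u v s t : ℝ) :
    ∀ᶠ τ in atTop,
      eCov h A B v (t + τ) - eCov h A B v (s + τ) - eCov h A B u (t + τ) + eCov h A B u (s + τ)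
        = (B - A / 2) * ((τ + (v + t)) ^ h - (τ + (v + s)) ^ h - (τ + (u + t)) ^ h
            + (τ + (u + s)) ^ h)
          - A / 2 * ((τ + (t - v)) ^ h - (τ + (s - v)) ^ h - (τ + (t - u)) ^ h
            + (τ + (s - u)) ^ h) := by
  filter_upwards [eventually_abs_sub_add_eq v t, eventually_abs_sub_add_eq v s,
    eventually_abs_sub_add_eq u t, eventually_abs_sub_add_eq u s] with τ hvt hvs hut hus
  simp only [eCov, subCov, cCov, hvt, hvs, hut, hus]
  ring_nf

theorem stmt2_general (h A B : ℝ)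
    (u v s t : ℝ) :
    Tendsto (fun τ : ℝ => τ ^ (2 - h) *
        (eCov h A B v (t + τ) - eCov h A B v (s + τ)
          - eCov h A B u (t + τ) + eCov h A B u (s + τ)))
      atTop (nhds (B * (h * (h - 1) * (v - u) * (t - s)))) := by
  have hsum := tendsto_rpow_second_difference_atTop h (a := v + t) (b := v + s) (c := u + t)
    (d := u + s) (by ring)
  have hdiff := tendsto_rpow_second_difference_atTop h (a := t - v) (b := s - v) (c := t - u)
    (d := s - u) (by ring)
  convert ((hsum.const_mul (B - A / 2)).sub (hdiff.const_mul (A / 2))).congr'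
    ((eventually_eCov_increment_eq h A B u v s t).mono fun τ hτ => ?_) using 2
  · ring
  · rw [hτ]
    ring

theorem stmt2 (h A B : ℝ) (hh : h ∈ Set.Ioo (1:ℝ) 2) (hA : 0 < A) (hB : 0 < B)
    (u v s t : ℝ) (hu : 0 ≤ u) (huv : u < v) (hvs : v ≤ s) (hst : s < t) :
    Tendsto (fun τ : ℝ => τ ^ (2 - h) *
        (eCov h A B v (t + τ) - eCov h A B v (s + τ)
          - eCov h A B u (t + τ) + eCov h A B u (s + τ)))
      atTop (nhds (B * (h * (h - 1) * (v - u) * (t - s)))) :=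
  stmt2_general h A B u v s t
end

section
/- Let h ∈ (1,2) and A > 0. Define C_h(s,t) = s^h + t^h − (1/2)[(s+t)^h + |s−t|^h] and e(s,t) = A·C_h(s,t). Fix 0 ≤ u < v ≤ s < t and define R(τ) = e(v, t+τ) − e(v, s+τ) − e(u, t+τ) + e(u, s+τ) for τ > 0. Then lim_{τ→∞} τ^{3−h} R(τ) = A · (h(h−1)(2−h)/2) · (v² − u²)(t−s); in particular R(τ) decays at the polynomial rate τ^{h−3}. -/
open Filter

/-- Covariance of the limit Gaussian process in the case `B = 0`. -/
noncomputable def eCov0 (h A s t : ℝ) : ℝ := A * subCov h s t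

/-!
For large `τ` all absolute values in the covariances resolve, and up to the factor `A` the increment
becomes `∑ cᵢ (τ + xᵢ)^h` with weights `cᵢ = ±1/2` and nodes `xᵢ ∈ {t ± v, s ± v, t ± u, s ± u}`.
These weights annihilate the polynomials of degree `< 3` at the nodes, so in the expansion
`τ^(3-h) (τ + x)^h = τ³ (1 + x/τ)^h` the terms of order `τ³, τ², τ` cancel, and the limit is the
cubic Taylor coefficient `h(h-1)(h-2)/6 · ∑ cᵢ xᵢ³ = h(h-1)(2-h)/2 · (v² - u²)(t - s)`.
The cancellation is made rigorous by iterating l'Hôpital's rule at `0⁺` in the variable `1/τ`.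
-/

open Topology Finset Nat

lemma tendsto_div_pow_succ_nhdsGT {f f' : ℝ → ℝ} {L : ℝ} (n : ℕ)
    (hf : ∀ᶠ y in 𝓝[>] 0, HasDerivAt f (f' y) y) (hf0 : Tendsto f (𝓝[>] 0) (𝓝 0))
    (hf' : Tendsto (fun y => f' y / y ^ n) (𝓝[>] 0) (𝓝 L)) :
    Tendsto (fun y => f y / y ^ (n + 1)) (𝓝[>] 0) (𝓝 (L / (n + 1))) := by
  refine HasDerivAt.lhopital_zero_nhdsGT hf (g' := fun y => (n + 1) * y ^ n)
    (.of_forall fun y => by simpa using hasDerivAt_pow (n + 1) y)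
    (eventually_mem_nhdsWithin.mono fun y (hy : 0 < y) => by positivity) hf0
    (by simpa using ((continuous_pow (M := ℝ) (n + 1)).tendsto 0).mono_left nhdsWithin_le_nhds)
    ((hf'.div_const _).congr fun y => ?_)
  rw [div_div, mul_comm]

section MomentCancellation

variable {ι : Type*} [Fintype ι] (c x : ι → ℝ)

lemma hasDerivAt_sum_mul_one_add_mul_rpow (p : ℝ) {y : ℝ} (hy : ∀ i, 0 < 1 + x i * y) :
    HasDerivAt (fun y => ∑ i, c i * (1 + x i * y) ^ p)
      (∑ i, c i * x i * p * (1 + x i * y) ^ (p - 1)) y := by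
  refine HasDerivAt.fun_sum fun i _ => ?_
  have hlin : HasDerivAt (fun y => 1 + x i * y) (x i) y := by
    simpa using ((hasDerivAt_id y).const_mul (x i)).const_add 1
  exact ((hlin.rpow_const (Or.inl (hy i).ne')).const_mul (c i)).congr_deriv (by ring)

lemma eventually_forall_one_add_mul_pos : ∀ᶠ y in 𝓝 (0 : ℝ), ∀ i, 0 < 1 + x i * y :=
  eventually_all.2 fun i =>
    ((continuous_const.add (continuous_const.mul continuous_id)).tendsto' 0 1 (by simp)).eventually
      (eventually_gt_nhds one_pos)

lemma tendsto_sum_mul_one_add_mul_rpow_nhdsGT (p : ℝ) :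
    Tendsto (fun y => ∑ i, c i * (1 + x i * y) ^ p) (𝓝[>] 0) (𝓝 (∑ i, c i)) := by
  have hcont := (hasDerivAt_sum_mul_one_add_mul_rpow c x p (y := 0) (by simp)).continuousAt
  simpa using hcont.tendsto.mono_left nhdsWithin_le_nhds

theorem tendsto_sum_mul_one_add_mul_rpow_div_pow (p : ℝ) (m : ℕ)
    (hmom : ∀ k < m, ∑ i, c i * x i ^ k = 0) :
    Tendsto (fun y => (∑ i, c i * (1 + x i * y) ^ p) / y ^ m) (𝓝[>] 0)
      (𝓝 ((∏ j ∈ range m, (p - j)) / m ! * ∑ i, c i * x i ^ m)) := by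
  induction m generalizing c p with
  | zero => simpa using tendsto_sum_mul_one_add_mul_rpow_nhdsGT c x p
  | succ m ih =>
    have hderiv := eventually_nhdsWithin_of_eventually_nhds (s := Set.Ioi 0)
      (eventually_forall_one_add_mul_pos x) |>.mono fun y hy =>
        hasDerivAt_sum_mul_one_add_mul_rpow c x p hy
    have hmoment : ∀ k, ∑ i, c i * x i * p * x i ^ k = p * ∑ i, c i * x i ^ (k + 1) :=
      fun k => by rw [mul_sum]; exact sum_congr rfl fun i _ => by ring
    have hmom' : ∀ k < m, ∑ i, c i * x i * p * x i ^ k = 0 := fun k hk => by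
      rw [hmoment, hmom (k + 1) (by omega), mul_zero]
    have hsum : ∑ i, c i = 0 := by simpa using hmom 0 (by omega)
    have hzero : Tendsto (fun y => ∑ i, c i * (1 + x i * y) ^ p) (𝓝[>] 0) (𝓝 0) :=
      hsum ▸ tendsto_sum_mul_one_add_mul_rpow_nhdsGT c x p
    convert tendsto_div_pow_succ_nhdsGT m hderiv hzero (ih _ (p - 1) hmom') using 2
    rw [hmoment, prod_range_succ', factorial_succ]
    push_cast
    simp only [sub_sub, add_comm (1 : ℝ)]
    field_simp
    ring

lemma rpow_sub_mul_add_rpow {τ : ℝ} (hτ : 0 < τ) {a : ℝ} (ha : 0 < τ + a) (p : ℝ) (m : ℕ) :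
    τ ^ ((m : ℝ) - p) * (τ + a) ^ p = (1 + a * τ⁻¹) ^ p / τ⁻¹ ^ m := by
  rw [show 1 + a * τ⁻¹ = (τ + a) * τ⁻¹ by field_simp, Real.mul_rpow ha.le (inv_nonneg.2 hτ.le),
    Real.inv_rpow hτ.le, Real.rpow_sub hτ, Real.rpow_natCast, inv_pow]
  field_simp

theorem tendsto_rpow_mul_sum_mul_add_rpow_atTop (p : ℝ) (m : ℕ)
    (hmom : ∀ k < m, ∑ i, c i * x i ^ k = 0) :
    Tendsto (fun τ => τ ^ ((m : ℝ) - p) * ∑ i, c i * (τ + x i) ^ p) atTop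
      (𝓝 ((∏ j ∈ range m, (p - j)) / m ! * ∑ i, c i * x i ^ m)) := by
  refine ((tendsto_sum_mul_one_add_mul_rpow_div_pow c x p m hmom).comp
    tendsto_inv_atTop_nhdsGT_zero).congr' ?_
  filter_upwards [eventually_gt_atTop 0, eventually_all.2 fun i => eventually_gt_atTop (-x i)]
    with τ hτ hx
  simp only [Function.comp_apply, sum_div, mul_sum, mul_div_assoc]
  refine sum_congr rfl fun i _ => ?_
  rw [mul_left_comm, rpow_sub_mul_add_rpow hτ (by linarith [hx i])]

end MomentCancellation

lemma subCov_add_of_sub_le (h : ℝ) {a b τ : ℝ} (hτ : a - b ≤ τ) :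
    subCov h a (b + τ) =
      a ^ h + (b + τ) ^ h - (1 / 2) * ((τ + (a + b)) ^ h + (τ + (b - a)) ^ h) := by
  rw [subCov, abs_sub_comm, abs_of_nonneg (by linarith)]
  ring_nf

theorem stmt3_general (h A : ℝ) (u v s t : ℝ) :
    Tendsto (fun τ : ℝ => τ ^ (3 - h) *
        (eCov0 h A v (t + τ) - eCov0 h A v (s + τ)
          - eCov0 h A u (t + τ) + eCov0 h A u (s + τ)))
      atTop (nhds (A * (h * (h - 1) * (2 - h) / 2) * (v ^ 2 - u ^ 2) * (t - s))) := by
  set c : Fin 8 → ℝ := ![-(1/2), -(1/2), 1/2, 1/2, 1/2, 1/2, -(1/2), -(1/2)]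
  set x : Fin 8 → ℝ := ![v + t, t - v, v + s, s - v, u + t, t - u, u + s, s - u]
  have hmom : ∀ k < 3, ∑ i, c i * x i ^ k = 0 := by
    intro k hk
    interval_cases k <;> simp only [Fin.sum_univ_eight, c, x, Matrix.cons_val] <;> ring
  have hcube : ∑ i, c i * x i ^ 3 = -3 * (v ^ 2 - u ^ 2) * (t - s) := by
    simp only [Fin.sum_univ_eight, c, x, Matrix.cons_val]; ring
  have hlim := (tendsto_rpow_mul_sum_mul_add_rpow_atTop c x h 3 hmom).const_mul A
  rw [hcube, Nat.cast_ofNat] at hlim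
  refine (hlim.congr' ?_).trans_eq (congrArg 𝓝 ?_)
  · filter_upwards [eventually_ge_atTop (v - s), eventually_ge_atTop (v - t),
      eventually_ge_atTop (u - s), eventually_ge_atTop (u - t)] with τ hvs hvt hus hut
    simp only [eCov0, subCov_add_of_sub_le h hvs, subCov_add_of_sub_le h hvt,
      subCov_add_of_sub_le h hus, subCov_add_of_sub_le h hut, Fin.sum_univ_eight, c, x,
      Matrix.cons_val]
    ring
  · simp only [prod_range_succ, prod_range_zero, factorial]
    push_cast
    ring

theorem stmt3 (h A : ℝ) (hh : h ∈ Set.Ioo (1:ℝ) 2) (hA : 0 < A)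
    (u v s t : ℝ) (hu : 0 ≤ u) (huv : u < v) (hvs : v ≤ s) (hst : s < t) :
    Tendsto (fun τ : ℝ => τ ^ (3 - h) *
        (eCov0 h A v (t + τ) - eCov0 h A v (s + τ)
          - eCov0 h A u (t + τ) + eCov0 h A u (s + τ)))
      atTop (nhds (A * (h * (h - 1) * (2 - h) / 2) * (v ^ 2 - u ^ 2) * (t - s))) :=
  stmt3_general h A u v s t
end

section
/- Let h ∈ (0,2) with h ≠ 1, and define c_h(s,t) = sgn(h−1)·[(s+t)^h − s^h − t^h] for s,t ≥ 0. Then c_h is a positive semidefinite kernel on [0,∞): for every n, every t_1,…,t_n ≥ 0 and every a_1,…,a_n ∈ ℝ, Σ_{i,j=1}^n a_i a_j c_h(t_i, t_j) ≥ 0. -/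
/-!
For `0 < h < 1` put `F u = 1 - exp (-u)`, for `1 < h < 2` put `F u = exp (-u) - 1 + u`. Then
`x ^ (-h - 1) * F x` is integrable on `(0, ∞)` with positive integral `K`, and the substitution
`x ↦ s * x` gives `∫ x ^ (-h - 1) * F (s * x) = K * s ^ h`. Since
`(1 - exp (-u)) * (1 - exp (-v)) = sgn (h - 1) * (F (u + v) - F u - F v)`, this yields
`K * c_h(s, t) = ∫ x ^ (-h - 1) * (1 - exp (-s x)) * (1 - exp (-t x)) dx`,
a Gram kernel in `L²(x ^ (-h - 1) dx)`, hence positive semidefinite.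
-/

/-- The kernel `c_h(s,t) = sgn(h-1) · [(s+t)^h − s^h − t^h]`. -/
noncomputable def cCovSgn (h s t : ℝ) : ℝ :=
  Real.sign (h - 1) * ((s + t) ^ h - s ^ h - t ^ h)

open MeasureTheory Set Real Asymptotics Filter

theorem sum_mul_integral_mul_nonneg {α ι : Type*} [MeasurableSpace α] {μ : Measure α}
    [Fintype ι] (a : ι → ℝ) (φ : ι → α → ℝ) {w : α → ℝ} (hw : 0 ≤ᵐ[μ] w)
    (hint : ∀ i j, Integrable (fun x => w x * (φ i x * φ j x)) μ) :
    0 ≤ ∑ i, ∑ j, a i * a j * ∫ x, w x * (φ i x * φ j x) ∂μ := by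
  have hsum : ∑ i, ∑ j, a i * a j * ∫ x, w x * (φ i x * φ j x) ∂μ
      = ∫ x, w x * (∑ i, a i * φ i x) ^ 2 ∂μ := by
    simp_rw [← integral_const_mul]
    rw [Finset.sum_congr rfl fun i _ =>
        (integral_finsetSum _ fun j _ => (hint i j).const_mul (a i * a j)).symm,
      ← integral_finsetSum _ fun i _ => integrable_finsetSum _ fun j _ => (hint i j).const_mul _]
    refine integral_congr_ae (ae_of_all _ fun x => ?_)
    dsimp only
    rw [sq, Finset.sum_mul_sum, Finset.mul_sum]
    refine Finset.sum_congr rfl fun i _ => ?_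
    rw [Finset.mul_sum]
    exact Finset.sum_congr rfl fun j _ => by ring
  rw [hsum]
  exact integral_nonneg_of_ae (hw.mono fun x hx => mul_nonneg hx (sq_nonneg _))

section RpowWeight

variable {F : ℝ → ℝ} {h s t ε : ℝ}

theorem integrableOn_rpow_mul_of_abs_le {p q : ℝ} (hF : Continuous F)
    (hFp : ∀ x, 0 < x → |F x| ≤ x ^ p) (hFq : ∀ x, 0 < x → |F x| ≤ x ^ q)
    (hqh : q < h) (hhp : h < p) :
    IntegrableOn (fun x => x ^ (-h - 1) * F x) (Ioi 0) := by
  have hbound : ∀ r : ℝ, (∀ x, 0 < x → |F x| ≤ x ^ r) → ∀ l : Filter ℝ, Ioi 0 ∈ l →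
      F =O[l] (fun x : ℝ => x ^ (-(-r))) :=
    fun r hr l hl => IsBigO.of_bound 1 <| mem_of_superset hl fun x (hx : 0 < x) => by
      change ‖F x‖ ≤ 1 * ‖x ^ (-(-r))‖
      rw [neg_neg, one_mul, Real.norm_eq_abs, Real.norm_eq_abs,
        abs_of_pos (rpow_pos_of_pos hx r)]
      exact hr x hx
  exact mellin_convergent_of_isBigO_scalar
    ((hF.locallyIntegrable (μ := volume)).locallyIntegrableOn _)
    (hbound q hFq atTop (Ioi_mem_atTop 0)) (neg_lt_neg hqh)
    (hbound p hFp _ self_mem_nhdsWithin) (neg_lt_neg hhp)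

theorem rpow_mul_comp_mul_left_eq {x : ℝ} (hs : 0 < s) (hx : 0 < x) :
    x ^ (-h - 1) * F (s * x) = s ^ (h + 1) * ((s * x) ^ (-h - 1) * F (s * x)) := by
  rw [mul_rpow hs.le hx.le, ← mul_assoc, ← mul_assoc, ← rpow_add hs]
  simp

theorem integrableOn_rpow_mul_comp_mul_left
    (hF : IntegrableOn (fun x => x ^ (-h - 1) * F x) (Ioi 0)) (hF0 : F 0 = 0) (hs : 0 ≤ s) :
    IntegrableOn (fun x => x ^ (-h - 1) * F (s * x)) (Ioi 0) := by
  rcases hs.eq_or_lt with rfl | hs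
  · simp [hF0]
  have hFs := (integrableOn_Ioi_comp_mul_left_iff _ 0 hs).mpr (by rwa [mul_zero])
  exact IntegrableOn.congr_fun (hFs.const_mul (s ^ (h + 1)))
    (fun x hx => (rpow_mul_comp_mul_left_eq hs hx).symm) measurableSet_Ioi

theorem integral_rpow_mul_comp_mul_left (hF0 : F 0 = 0) (hh : h ≠ 0) (hs : 0 ≤ s) :
    ∫ x in Ioi 0, x ^ (-h - 1) * F (s * x) = s ^ h * ∫ x in Ioi 0, x ^ (-h - 1) * F x := by
  rcases hs.eq_or_lt with rfl | hs
  · simp [hF0, zero_rpow hh]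
  rw [setIntegral_congr_fun measurableSet_Ioi fun x hx => rpow_mul_comp_mul_left_eq hs hx,
    integral_const_mul, integral_comp_mul_left_Ioi (fun x => x ^ (-h - 1) * F x) 0 hs, mul_zero,
    smul_eq_mul, ← mul_assoc, ← rpow_neg_one, ← rpow_add hs]
  ring_nf

theorem integral_rpow_mul_pos (hF : IntegrableOn (fun x => x ^ (-h - 1) * F x) (Ioi 0))
    (hFpos : ∀ x, 0 < x → 0 < F x) : 0 < ∫ x in Ioi 0, x ^ (-h - 1) * F x := by
  have hpos : ∀ x ∈ Ioi (0 : ℝ), 0 < x ^ (-h - 1) * F x :=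
    fun x hx => mul_pos (rpow_pos_of_pos hx _) (hFpos x hx)
  rw [setIntegral_pos_iff_support_of_nonneg_ae
    ((ae_restrict_iff' measurableSet_Ioi).mpr (ae_of_all _ fun x hx => (hpos x hx).le)) hF]
  exact (by simp : (0 : ENNReal) < volume (Ioi (0 : ℝ))).trans_le
    (measure_mono fun x hx => ⟨(hpos x hx).ne', hx⟩)

theorem eqOn_rpow_mul_one_sub_exp_mul_one_sub_exp
    (hrel : ∀ u v, 0 ≤ u → 0 ≤ v →
      (1 - exp (-u)) * (1 - exp (-v)) = ε * (F (u + v) - F u - F v))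
    (hs : 0 ≤ s) (ht : 0 ≤ t) :
    EqOn (fun x => x ^ (-h - 1) * ((1 - exp (-(s * x))) * (1 - exp (-(t * x)))))
      (fun x => ε * (x ^ (-h - 1) * F ((s + t) * x) - x ^ (-h - 1) * F (s * x)
        - x ^ (-h - 1) * F (t * x))) (Ioi 0) := fun x (hx : 0 < x) => by
  simp only [hrel _ _ (mul_nonneg hs hx.le) (mul_nonneg ht hx.le), add_mul]
  ring

theorem integrableOn_rpow_mul_one_sub_exp_mul_one_sub_exp (hF0 : F 0 = 0)
    (hrel : ∀ u v, 0 ≤ u → 0 ≤ v →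
      (1 - exp (-u)) * (1 - exp (-v)) = ε * (F (u + v) - F u - F v))
    (hF : IntegrableOn (fun x => x ^ (-h - 1) * F x) (Ioi 0)) (hs : 0 ≤ s) (ht : 0 ≤ t) :
    IntegrableOn (fun x => x ^ (-h - 1) * ((1 - exp (-(s * x))) * (1 - exp (-(t * x)))))
      (Ioi 0) := by
  have hI {r : ℝ} (hr : 0 ≤ r) := integrableOn_rpow_mul_comp_mul_left hF hF0 hr
  exact IntegrableOn.congr_fun
    (((hI (add_nonneg hs ht)).sub' (hI hs)).sub' (hI ht) |>.const_mul ε)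
    (eqOn_rpow_mul_one_sub_exp_mul_one_sub_exp hrel hs ht).symm measurableSet_Ioi

theorem integral_rpow_mul_one_sub_exp_mul_one_sub_exp (hF0 : F 0 = 0)
    (hrel : ∀ u v, 0 ≤ u → 0 ≤ v →
      (1 - exp (-u)) * (1 - exp (-v)) = ε * (F (u + v) - F u - F v))
    (hF : IntegrableOn (fun x => x ^ (-h - 1) * F x) (Ioi 0)) (hh : h ≠ 0)
    (hs : 0 ≤ s) (ht : 0 ≤ t) :
    ∫ x in Ioi 0, x ^ (-h - 1) * ((1 - exp (-(s * x))) * (1 - exp (-(t * x))))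
      = ε * (∫ x in Ioi 0, x ^ (-h - 1) * F x) * ((s + t) ^ h - s ^ h - t ^ h) := by
  have hI {r : ℝ} (hr : 0 ≤ r) := integrableOn_rpow_mul_comp_mul_left hF hF0 hr
  have hst := add_nonneg hs ht
  rw [setIntegral_congr_fun measurableSet_Ioi
      (eqOn_rpow_mul_one_sub_exp_mul_one_sub_exp hrel hs ht),
    integral_const_mul, integral_sub ((hI hst).sub' (hI hs)) (hI ht),
    integral_sub (hI hst) (hI hs), integral_rpow_mul_comp_mul_left hF0 hh hst,
    integral_rpow_mul_comp_mul_left hF0 hh hs, integral_rpow_mul_comp_mul_left hF0 hh ht]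
  ring

end RpowWeight

theorem integrableOn_rpow_mul_one_sub_exp_neg {h : ℝ} (h0 : 0 < h) (h1 : h < 1) :
    IntegrableOn (fun x => x ^ (-h - 1) * (1 - exp (-x))) (Ioi 0) := by
  refine integrableOn_rpow_mul_of_abs_le (p := 1) (q := 0) (by fun_prop) (fun x hx => ?_)
    (fun x hx => ?_) h0 h1 <;>
  rw [abs_of_nonneg (by linarith [exp_le_one_iff.mpr (neg_nonpos.mpr hx.le)])]
  · rw [rpow_one]; linarith [one_sub_le_exp_neg x]
  · rw [rpow_zero]; linarith [exp_pos (-x)]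

theorem integrableOn_rpow_mul_exp_neg_sub_one_add {h : ℝ} (h1 : 1 < h) (h2 : h < 2) :
    IntegrableOn (fun x => x ^ (-h - 1) * (exp (-x) - 1 + x)) (Ioi 0) := by
  refine integrableOn_rpow_mul_of_abs_le (p := 2) (q := 1) (by fun_prop) (fun x hx => ?_)
    (fun x hx => ?_) h1 h2 <;>
  rw [abs_of_nonneg (by linarith [one_sub_le_exp_neg x])]
  · -- `exp (-x) ≤ (1 + x)⁻¹`, and `(1 + x)⁻¹ - 1 + x = x ^ 2 / (1 + x)`
    have hexp : exp (-x) * (1 + x) ≤ 1 := by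
      rw [exp_neg]; exact inv_mul_le_one_of_le₀ (by linarith [add_one_le_exp x]) (exp_pos x).le
    rw [rpow_two]
    nlinarith [pow_pos hx 3]
  · rw [rpow_one]; linarith [exp_le_one_iff.mpr (neg_nonpos.mpr hx.le)]

theorem exists_integral_representation {h : ℝ} (hh : h ∈ Ioo 0 2) (hne : h ≠ 1) :
    ∃ F : ℝ → ℝ, F 0 = 0 ∧
      (∀ u v, 0 ≤ u → 0 ≤ v →
        (1 - exp (-u)) * (1 - exp (-v)) = Real.sign (h - 1) * (F (u + v) - F u - F v)) ∧
      IntegrableOn (fun x => x ^ (-h - 1) * F x) (Ioi 0) ∧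
      0 < ∫ x in Ioi 0, x ^ (-h - 1) * F x := by
  rcases hne.lt_or_gt with hlt | hgt
  · have hF := integrableOn_rpow_mul_one_sub_exp_neg hh.1 hlt
    refine ⟨fun u => 1 - exp (-u), by simp, fun u v _ _ => ?_, hF,
      integral_rpow_mul_pos hF fun x hx => by simpa using hx⟩
    simp only [sign_of_neg (by linarith : h - 1 < 0), neg_add, exp_add]
    ring
  · have hF := integrableOn_rpow_mul_exp_neg_sub_one_add hgt hh.2
    refine ⟨fun u => exp (-u) - 1 + u, by simp, fun u v _ _ => ?_, hF,
      integral_rpow_mul_pos hF fun x hx => by linarith [add_one_lt_exp (neg_ne_zero.mpr hx.ne')]⟩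
    simp only [sign_of_pos (by linarith : 0 < h - 1), neg_add, exp_add]
    ring

theorem stmt5 (h : ℝ) (hh : h ∈ Set.Ioo (0:ℝ) 2) (hne : h ≠ 1) :
    ∀ (n : ℕ) (t : Fin n → ℝ) (a : Fin n → ℝ), (∀ i, 0 ≤ t i) →
      0 ≤ ∑ i : Fin n, ∑ j : Fin n, a i * a j * cCovSgn h (t i) (t j) := by
  intro n t a ht
  obtain ⟨F, hF0, hrel, hF, hK⟩ := exists_integral_representation hh hne
  set K := ∫ x in Ioi 0, x ^ (-h - 1) * F x
  have hrepr : ∀ i j,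
      ∫ x in Ioi 0, x ^ (-h - 1) * ((1 - exp (-(t i * x))) * (1 - exp (-(t j * x))))
        = K * cCovSgn h (t i) (t j) := fun i j => by
    rw [integral_rpow_mul_one_sub_exp_mul_one_sub_exp hF0 hrel hF hh.1.ne' (ht i) (ht j), cCovSgn]
    ring
  have hw : 0 ≤ᵐ[volume.restrict (Ioi 0)] fun x : ℝ => x ^ (-h - 1) :=
    (ae_restrict_iff' measurableSet_Ioi).mpr (ae_of_all _ fun x (hx : 0 < x) => rpow_nonneg hx.le _)
  have hpsd := sum_mul_integral_mul_nonneg a (fun i x => 1 - exp (-(t i * x))) hw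
    fun i j => integrableOn_rpow_mul_one_sub_exp_mul_one_sub_exp hF0 hrel hF (ht i) (ht j)
  simp_rw [hrepr, mul_left_comm _ K, ← Finset.mul_sum] at hpsd
  exact nonneg_of_mul_nonneg_right hpsd hK
end

section
/- Let h ∈ (1,2), let ψ : [0,1] → [0,∞) be measurable and integrable, and set χ(s) = ∫_s^1 ψ(u) du. Then ∫_0^1 ∫_0^1 χ(s₁) χ(s₂) (s₁ + s₂)^{h−2} ds₁ ds₂ = (h(h−1))^{−1} ∫_0^1 ∫_0^1 ψ(u₁) ψ(u₂) [ (u₁ + u₂)^h − u₁^h − u₂^h ] du₁ du₂. -/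
/-!
Write `χ s = ∫ 1_{s < u} ψ u du`. Fubini on the triangle `{s < u}` turns `∫ χ φ` into
`∫ ψ Φ`, where `Φ u = ∫_0^u φ`. Doing this first in `s₂` with `φ = (s₁ + ·)^(h-2)` and then in
`s₁` reduces the left side to `∫∫ ψ u₁ ψ u₂ K(u₁, u₂)` with
`K(u₁, u₂) = ∫_0^{u₁} ∫_0^{u₂} (s₁ + s₂)^(h-2) = ((u₁ + u₂)^h - u₁^h - u₂^h) / (h (h - 1))`;
the exponent `h - 2 > -1` makes all these integrals converge.
-/

open MeasureTheory intervalIntegral Set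

theorem integral_tail_mul_eq_integral_mul_primitive {φ ψ : ℝ → ℝ} {a b : ℝ} (hab : a ≤ b)
    (hφ : IntervalIntegrable φ volume a b) (hψ : IntervalIntegrable ψ volume a b) :
    ∫ s in a..b, (∫ u in s..b, ψ u) * φ s = ∫ u in a..b, ψ u * ∫ s in a..u, φ s := by
  set f : ℝ × ℝ → ℝ := {p | p.1 < p.2}.indicator fun p => φ p.1 * ψ p.2
  have hf : IntegrableOn f (uIoc a b ×ˢ uIoc a b) := by
    refine IntegrableOn.indicator ?_ (measurableSet_lt measurable_fst measurable_snd)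
    rw [IntegrableOn, Measure.volume_eq_prod, ← Measure.prod_restrict]
    exact hφ.def'.mul_prod hψ.def'
  have h_left : EqOn (fun s => ∫ u in a..b, f (s, u)) (fun s => (∫ u in s..b, ψ u) * φ s)
      (uIcc a b) := by
    intro s hs
    rw [uIcc_of_le hab] at hs
    have hslice : (fun u => f (s, u)) = fun u => (Ioi s).indicator ψ u * φ s := by
      ext u; by_cases hsu : s < u <;> simp [f, hsu, mul_comm]
    dsimp only
    rw [hslice, integral_of_le hab, integral_of_le hs.2, MeasureTheory.integral_mul_const,
      setIntegral_indicator measurableSet_Ioi, Ioc_inter_Ioi, sup_of_le_right hs.1]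
  have h_right : EqOn (fun u => ∫ s in a..b, f (s, u)) (fun u => ψ u * ∫ s in a..u, φ s)
      (uIcc a b) := by
    intro u hu
    rw [uIcc_of_le hab] at hu
    have hslice : (fun s => f (s, u)) = fun s => ψ u * (Iio u).indicator φ s := by
      ext s; by_cases hsu : s < u <;> simp [f, hsu, mul_comm]
    dsimp only
    rw [hslice, integral_of_le hab, integral_of_le hu.1, MeasureTheory.integral_const_mul,
      integral_congr_ae (ae_restrict_of_ae (indicator_ae_eq_of_ae_eq_set Iio_ae_eq_Iic)),
      setIntegral_indicator measurableSet_Iic, Ioc_inter_Iic, inf_of_le_right hu.2]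
  calc ∫ s in a..b, (∫ u in s..b, ψ u) * φ s = ∫ s in a..b, ∫ u in a..b, f (s, u) :=
        (integral_congr h_left).symm
    _ = ∫ u in a..b, ∫ s in a..b, f (s, u) := intervalIntegral_intervalIntegral_swap hf
    _ = ∫ u in a..b, ψ u * ∫ s in a..u, φ s := integral_congr h_right

theorem IntegrableOn.mul_continuousOn_prod {ψ : ℝ → ℝ} {F : ℝ → ℝ → ℝ} {s t : Set ℝ}
    (hs : IsCompact s) (ht : IsCompact t) (hψ : IntegrableOn ψ t)
    (hF : ContinuousOn F.uncurry (s ×ˢ t)) :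
    IntegrableOn (fun p : ℝ × ℝ => ψ p.2 * F p.1 p.2) (s ×ˢ t) := by
  have hst := hs.prod ht
  obtain ⟨C, hC⟩ := hst.exists_bound_of_continuousOn hF
  have : IsFiniteMeasure (volume.restrict s) := isFiniteMeasure_restrict.2 hs.measure_lt_top.ne
  have hψ' : IntegrableOn (fun p : ℝ × ℝ => ψ p.2) (s ×ˢ t) := by
    rw [IntegrableOn, Measure.volume_eq_prod, ← Measure.prod_restrict]
    exact hψ.comp_snd _
  exact hψ'.mul_bdd (hF.aestronglyMeasurable hst.measurableSet)
    (ae_restrict_of_forall_mem hst.measurableSet hC)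

theorem IntegrableOn.intervalIntegrable_intervalIntegral {F : ℝ → ℝ → ℝ} {a b c d : ℝ}
    (hF : IntegrableOn F.uncurry (uIoc a b ×ˢ uIoc c d)) :
    IntervalIntegrable (fun x => ∫ y in c..d, F x y) volume a b := by
  rw [IntegrableOn, Measure.volume_eq_prod, ← Measure.prod_restrict] at hF
  simp_rw [intervalIntegrable_iff, intervalIntegral_eq_integral_uIoc]
  exact hF.integral_prod_left.smul (if c ≤ d then (1:ℝ) else -1)

noncomputable def rpowPrimitive (h s u : ℝ) : ℝ := ((s + u) ^ (h - 1) - s ^ (h - 1)) / (h - 1)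

theorem continuous_rpowPrimitive {h : ℝ} (hh : 1 ≤ h) : Continuous (rpowPrimitive h).uncurry := by
  have hpow : Continuous (· ^ (h - 1) : ℝ → ℝ) := Real.continuous_rpow_const (by linarith)
  exact ((hpow.comp (continuous_fst.add continuous_snd)).sub
    (hpow.comp continuous_fst)).div_const _

theorem integral_add_rpow_sub_two {h : ℝ} (hh : 1 < h) (s u : ℝ) :
    ∫ t in (0:ℝ)..u, (s + t) ^ (h - 2) = rpowPrimitive h s u := by
  rw [integral_comp_add_left (· ^ (h - 2)), integral_rpow (Or.inl (by linarith)), add_zero,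
    show h - 2 + 1 = h - 1 by ring, rpowPrimitive]

theorem integral_rpowPrimitive {h : ℝ} (hh : 1 < h) (u v : ℝ) :
    ∫ s in (0:ℝ)..u, rpowPrimitive h s v = ((u + v) ^ h - u ^ h - v ^ h) / (h * (h - 1)) := by
  have hr : -1 < h - 1 := by linarith
  have hpow : Continuous (· ^ (h - 1) : ℝ → ℝ) := Real.continuous_rpow_const (by linarith)
  have hshift : Continuous fun x : ℝ => (x + v) ^ (h - 1) := hpow.comp (continuous_add_const v)
  simp only [rpowPrimitive]
  rw [intervalIntegral.integral_div,
    integral_sub (hshift.intervalIntegrable _ _) (hpow.intervalIntegrable _ _),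
    integral_comp_add_right (· ^ (h - 1)), integral_rpow (Or.inl hr), integral_rpow (Or.inl hr),
    show h - 1 + 1 = h by ring, zero_add, Real.zero_rpow (by linarith)]
  field_simp
  ring

theorem integral_tail_mul_add_rpow {ψ : ℝ → ℝ} {h b : ℝ} (hh : 1 < h) (hb : 0 ≤ b)
    (hψ : IntervalIntegrable ψ volume 0 b) (s : ℝ) :
    ∫ t in (0:ℝ)..b, (∫ u in t..b, ψ u) * (s + t) ^ (h - 2)
      = ∫ u in (0:ℝ)..b, ψ u * rpowPrimitive h s u := by
  have hφ : IntervalIntegrable (fun t => (s + t) ^ (h - 2)) volume 0 b := by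
    simpa using (intervalIntegrable_rpow' (r := h - 2) (by linarith)
      (a := s + 0) (b := s + b)).comp_add_left s
  simp_rw [integral_tail_mul_eq_integral_mul_primitive hb hφ hψ, integral_add_rpow_sub_two hh]

theorem stmt10_general (h : ℝ) (hh : h ∈ Set.Ioo (1:ℝ) 2)
    (ψ : ℝ → ℝ)
    (hψint : IntegrableOn ψ (Set.Icc 0 1))
    (χ : ℝ → ℝ) (hχ : ∀ s, χ s = ∫ u in s..(1:ℝ), ψ u) :
    ∫ s₁ in (0:ℝ)..1, ∫ s₂ in (0:ℝ)..1, χ s₁ * χ s₂ * (s₁ + s₂) ^ (h - 2) =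
      (h * (h - 1))⁻¹ *
        ∫ u₁ in (0:ℝ)..1, ∫ u₂ in (0:ℝ)..1,
          ψ u₁ * ψ u₂ * ((u₁ + u₂) ^ h - u₁ ^ h - u₂ ^ h) := by
  obtain ⟨h_gt, -⟩ := hh
  obtain rfl : χ = fun s => ∫ u in s..1, ψ u := funext hχ
  rw [← uIcc_of_le zero_le_one] at hψint
  have hψ : IntervalIntegrable ψ volume 0 1 := hψint.intervalIntegrable
  have hψK : ∀ u, IntegrableOn (fun s u => ψ u * rpowPrimitive h s u).uncurry
      (uIoc 0 u ×ˢ uIoc 0 1) := fun u =>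
    (IntegrableOn.mul_continuousOn_prod isCompact_uIcc isCompact_uIcc hψint
      (continuous_rpowPrimitive h_gt.le).continuousOn).mono_set
      (prod_mono uIoc_subset_uIcc uIoc_subset_uIcc)
  calc _ = ∫ s₁ in (0:ℝ)..1,
          (∫ u in s₁..1, ψ u) * ∫ u₂ in (0:ℝ)..1, ψ u₂ * rpowPrimitive h s₁ u₂ := by
        congr 1 with s₁
        rw [← integral_tail_mul_add_rpow h_gt zero_le_one hψ, ← intervalIntegral.integral_const_mul]
        congr 1 with s₂
        ring
    _ = ∫ u₁ in (0:ℝ)..1,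
          ψ u₁ * ∫ s in (0:ℝ)..u₁, ∫ u₂ in (0:ℝ)..1, ψ u₂ * rpowPrimitive h s u₂ :=
        integral_tail_mul_eq_integral_mul_primitive zero_le_one
          (IntegrableOn.intervalIntegrable_intervalIntegral (hψK 1)) hψ
    _ = ∫ u₁ in (0:ℝ)..1, ψ u₁ * ∫ u₂ in (0:ℝ)..1,
          ψ u₂ * (((u₁ + u₂) ^ h - u₁ ^ h - u₂ ^ h) / (h * (h - 1))) := by
        congr 1 with u₁
        rw [intervalIntegral_intervalIntegral_swap (hψK u₁)]
        simp only [intervalIntegral.integral_const_mul, integral_rpowPrimitive h_gt]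
    _ = _ := by
        simp only [← intervalIntegral.integral_const_mul]
        congr 1 with u₁
        congr 1 with u₂
        ring

theorem stmt10 (h : ℝ) (hh : h ∈ Set.Ioo (1:ℝ) 2)
    (ψ : ℝ → ℝ) (hψmeas : Measurable ψ) (hψ0 : ∀ u, 0 ≤ ψ u)
    (hψint : IntegrableOn ψ (Set.Icc 0 1))
    (χ : ℝ → ℝ) (hχ : ∀ s, χ s = ∫ u in s..(1:ℝ), ψ u) :
    ∫ s₁ in (0:ℝ)..1, ∫ s₂ in (0:ℝ)..1, χ s₁ * χ s₂ * (s₁ + s₂) ^ (h - 2) =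
      (h * (h - 1))⁻¹ *
        ∫ u₁ in (0:ℝ)..1, ∫ u₂ in (0:ℝ)..1,
          ψ u₁ * ψ u₂ * ((u₁ + u₂) ^ h - u₁ ^ h - u₂ ^ h) :=
  stmt10_general h hh ψ hψint χ hχ
end

section
/- Let 0 < α < d < 2α and set h = 3 − d/α ∈ (1,2). Then for every measurable g : ℝ^d → [0,∞), every T > 0 and all 0 ≤ s ≤ t, T^{2−h} ∫_{ℝ^d} g(z) ( ∫_s^t e^{−T u |z|^α} du )² dz ≤ (t − s)^h ∫_{ℝ^d} g(z) |z|^{α − d} dz. -/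
/-!
With `c = T ‖z‖ ^ α` and `δ = h / 2 ∈ (1/2, 1)`,
`∫_s^t e^{-cu} du = e^{-cs} (1 - e^{-c(t-s)}) / c ≤ (c (t - s)) ^ δ / c`
by `1 - e^{-x} ≤ x ^ δ`. Squaring gives `c ^ (h - 2) (t - s) ^ h`, and
`T ^ (2 - h) c ^ (h - 2) = ‖z‖ ^ (α (h - 2)) = ‖z‖ ^ (α - d)`; integrate against `g`.
-/

open MeasureTheory ENNReal

lemma Real.one_sub_exp_neg_le_rpow {x δ : ℝ} (hx : 0 ≤ x) (hδ0 : 0 ≤ δ) (hδ1 : δ ≤ 1) :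
    1 - Real.exp (-x) ≤ x ^ δ := by
  have hexp := Real.add_one_le_exp (-x)
  rcases le_total x 1 with hx1 | hx1
  · calc 1 - Real.exp (-x) ≤ x := by linarith
      _ = x ^ (1 : ℝ) := (Real.rpow_one x).symm
      _ ≤ x ^ δ := Real.rpow_le_rpow_of_exponent_ge' hx hx1 hδ0 hδ1
  · linarith [Real.one_le_rpow hx1 hδ0, Real.exp_pos (-x)]

lemma integral_exp_neg_mul {c : ℝ} (hc : c ≠ 0) (s t : ℝ) :
    ∫ u in s..t, Real.exp (-(c * u)) = (Real.exp (-(c * s)) - Real.exp (-(c * t))) / c := by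
  simp_rw [← neg_mul]
  rw [intervalIntegral.integral_comp_mul_left Real.exp (neg_ne_zero.mpr hc), integral_exp,
    smul_eq_mul, inv_neg]
  field_simp
  ring

lemma integral_exp_neg_mul_le_rpow {c s t δ : ℝ} (hc : 0 < c) (hs : 0 ≤ s) (hst : s ≤ t)
    (hδ0 : 0 ≤ δ) (hδ1 : δ ≤ 1) :
    ∫ u in s..t, Real.exp (-(c * u)) ≤ c ^ (δ - 1) * (t - s) ^ δ := by
  have hts : 0 ≤ c * (t - s) := mul_nonneg hc.le (sub_nonneg.mpr hst)
  have hsplit : Real.exp (-(c * s)) - Real.exp (-(c * t))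
      = Real.exp (-(c * s)) * (1 - Real.exp (-(c * (t - s)))) := by
    rw [mul_sub, mul_one, ← Real.exp_add]
    ring_nf
  rw [integral_exp_neg_mul hc.ne', hsplit, div_le_iff₀ hc]
  calc Real.exp (-(c * s)) * (1 - Real.exp (-(c * (t - s))))
      ≤ 1 * (c * (t - s)) ^ δ := by
        gcongr
        · linarith [Real.exp_le_one_iff.mpr (neg_nonpos.mpr hts)]
        · exact Real.exp_le_one_iff.mpr (by nlinarith)
        · exact Real.one_sub_exp_neg_le_rpow hts hδ0 hδ1
    _ = c ^ (δ - 1) * (t - s) ^ δ * c := by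
        rw [Real.mul_rpow hc.le (sub_nonneg.mpr hst), Real.rpow_sub_one hc.ne']
        field_simp

lemma sq_integral_exp_neg_mul_rpow_le {T r α h s t : ℝ} (hT : 0 < T) (hr : 0 < r)
    (hs : 0 ≤ s) (hst : s ≤ t) (hh0 : 0 ≤ h) (hh2 : h ≤ 2) :
    T ^ (2 - h) * (∫ u in s..t, Real.exp (-(T * u * r ^ α))) ^ 2
      ≤ (t - s) ^ h * r ^ (α * (h - 2)) := by
  set c := T * r ^ α
  have hc : 0 < c := mul_pos hT (Real.rpow_pos_of_pos hr α)
  have hts : 0 ≤ t - s := sub_nonneg.mpr hst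
  have hI0 : 0 ≤ ∫ u in s..t, Real.exp (-(T * u * r ^ α)) :=
    intervalIntegral.integral_nonneg hst fun u _ => (Real.exp_pos _).le
  have hI : ∫ u in s..t, Real.exp (-(T * u * r ^ α)) ≤ c ^ (h / 2 - 1) * (t - s) ^ (h / 2) := by
    simp_rw [mul_right_comm T _ (r ^ α)]
    exact integral_exp_neg_mul_le_rpow hc hs hst (by linarith) (by linarith)
  have hsq : (c ^ (h / 2 - 1) * (t - s) ^ (h / 2)) ^ 2 = c ^ (h - 2) * (t - s) ^ h := by
    rw [mul_pow, ← Real.rpow_mul_natCast hc.le, ← Real.rpow_mul_natCast hts]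
    ring_nf
  have hcancel : T ^ (2 - h) * c ^ (h - 2) = r ^ (α * (h - 2)) := by
    rw [Real.mul_rpow hT.le (Real.rpow_nonneg hr.le α), ← mul_assoc, ← Real.rpow_add hT,
      ← Real.rpow_mul hr.le]
    simp
  calc T ^ (2 - h) * (∫ u in s..t, Real.exp (-(T * u * r ^ α))) ^ 2
      ≤ T ^ (2 - h) * (c ^ (h - 2) * (t - s) ^ h) := by
        rw [← hsq]
        gcongr
    _ = (t - s) ^ h * r ^ (α * (h - 2)) := by
        rw [← hcancel]
        ring

theorem stmt13_general (d : ℕ) (α : ℝ) (hα : 0 < α) (hαd : α < (d : ℝ)) (hd2α : (d : ℝ) < 2 * α)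
    (h : ℝ) (hdef : h = 3 - (d : ℝ) / α)
    (g : EuclideanSpace ℝ (Fin d) → ℝ) (hg0 : ∀ z, 0 ≤ g z)
    (T : ℝ) (hT : 0 < T) (s t : ℝ) (hs : 0 ≤ s) (hst : s ≤ t) :
    ENNReal.ofReal (T ^ (2 - h)) *
        ∫⁻ z, ENNReal.ofReal
          (g z * (∫ u in s..t, Real.exp (-(T * u * ‖z‖ ^ α))) ^ 2)
      ≤ ENNReal.ofReal ((t - s) ^ h) *
        ∫⁻ z, ENNReal.ofReal (g z * ‖z‖ ^ (α - (d : ℝ))) := by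
  have hda : 1 < (d : ℝ) / α := (one_lt_div hα).mpr hαd
  have hda2 : (d : ℝ) / α < 2 := (div_lt_iff₀ hα).mpr (by linarith)
  have hexp : α * (h - 2) = α - d := by
    rw [hdef]
    field_simp
    ring
  have : NeZero d := ⟨by exact_mod_cast (hα.trans hαd).ne'⟩
  rw [← lintegral_const_mul' _ _ ENNReal.ofReal_ne_top,
    ← lintegral_const_mul' _ _ ENNReal.ofReal_ne_top]
  -- Only almost everywhere: at `z = 0` the right-hand integrand is `0 ^ (α - d) = 0`.
  refine lintegral_mono_ae ?_
  filter_upwards [compl_mem_ae_iff.mpr (measure_singleton (0 : EuclideanSpace ℝ (Fin d)))]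
    with z hz
  rw [← ENNReal.ofReal_mul (Real.rpow_nonneg hT.le _),
    ← ENNReal.ofReal_mul (Real.rpow_nonneg (sub_nonneg.mpr hst) _), ← hexp]
  refine ENNReal.ofReal_le_ofReal ?_
  have hbound := sq_integral_exp_neg_mul_rpow_le (α := α) (h := h) hT (norm_pos_iff.mpr hz)
    hs hst (by linarith) (by linarith)
  linarith [mul_le_mul_of_nonneg_left hbound (hg0 z)]

theorem stmt13 (d : ℕ) (α : ℝ) (hα : 0 < α) (hαd : α < (d : ℝ)) (hd2α : (d : ℝ) < 2 * α)
    (h : ℝ) (hdef : h = 3 - (d : ℝ) / α)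
    (g : EuclideanSpace ℝ (Fin d) → ℝ) (hg : Measurable g) (hg0 : ∀ z, 0 ≤ g z)
    (T : ℝ) (hT : 0 < T) (s t : ℝ) (hs : 0 ≤ s) (hst : s ≤ t) :
    ENNReal.ofReal (T ^ (2 - h)) *
        ∫⁻ z, ENNReal.ofReal
          (g z * (∫ u in s..t, Real.exp (-(T * u * ‖z‖ ^ α))) ^ 2)
      ≤ ENNReal.ofReal ((t - s) ^ h) *
        ∫⁻ z, ENNReal.ofReal (g z * ‖z‖ ^ (α - (d : ℝ))) :=
  stmt13_general d α hα hαd hd2α h hdef g hg0 T hT s t hs hst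
end

section
/- Let h ∈ (1,2). Then for all 0 ≤ s ≤ t one has (2t)^h − 2(s+t)^h + (2s)^h ≤ (2^h − 2)(t − s)^h. In particular the left-hand side is nonnegative and is O((t−s)^h) uniformly in s, t. -/
open Real Set

lemma mid_concave {p a b : ℝ} (hp₀ : 0 ≤ p) (hp₁ : p ≤ 1) (ha : 0 ≤ a) (hb : 0 ≤ b) :
    a ^ p + b ^ p ≤ 2 * ((a + b) / 2) ^ p := by
  have := (Real.concaveOn_rpow hp₀ hp₁).2 (Set.mem_Ici.2 ha) (Set.mem_Ici.2 hb)
    (by norm_num : (0:ℝ) ≤ 1/2) (by norm_num : (0:ℝ) ≤ 1/2) (by norm_num)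
  simp only [smul_eq_mul] at this
  have e : (1:ℝ)/2 * a + 1/2 * b = (a + b) / 2 := by ring
  rw [e] at this
  linarith

lemma mid_convex {p a b : ℝ} (hp : 1 ≤ p) (ha : 0 ≤ a) (hb : 0 ≤ b) :
    2 * ((a + b) / 2) ^ p ≤ a ^ p + b ^ p := by
  have := (convexOn_rpow hp).2 (Set.mem_Ici.2 ha) (Set.mem_Ici.2 hb)
    (by norm_num : (0:ℝ) ≤ 1/2) (by norm_num : (0:ℝ) ≤ 1/2) (by norm_num)
  simp only [smul_eq_mul] at this
  have e : (1:ℝ)/2 * a + 1/2 * b = (a + b) / 2 := by ring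
  rw [e] at this
  linarith

theorem stmt14 (h : ℝ) (hh : h ∈ Set.Ioo (1:ℝ) 2) (s t : ℝ) (hs : 0 ≤ s) (hst : s ≤ t) :
    0 ≤ (2 * t) ^ h - 2 * (s + t) ^ h + (2 * s) ^ h ∧
      (2 * t) ^ h - 2 * (s + t) ^ h + (2 * s) ^ h ≤ (2 ^ h - 2) * (t - s) ^ h := by
  obtain ⟨hh1, hh2⟩ := hh
  have ht : 0 ≤ t := hs.trans hst
  constructor
  · have := mid_convex hh1.le (a := 2*s) (b := 2*t) (by linarith) (by linarith)
    have e : (2*s + 2*t)/2 = s + t := by ring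
    rw [e] at this
    linarith
  · set d := t - s with hd
    have hd0 : 0 ≤ d := by linarith
    set F : ℝ → ℝ := fun x => 2 * (2*x + d) ^ h - (2*x + 2*d) ^ h - (2*x) ^ h with hF
    have hderiv : ∀ x : ℝ, HasDerivAt F
        (2 * (h * (2*x + d) ^ (h-1) * 2) - h * (2*x + 2*d) ^ (h-1) * 2
          - h * (2*x) ^ (h-1) * 2) x := by
      intro x
      have g : ∀ c : ℝ, HasDerivAt (fun x : ℝ => (2*x + c) ^ h)
          (h * (2*x + c) ^ (h-1) * 2) x := by
        intro c
        have l : HasDerivAt (fun x : ℝ => 2*x + c) 2 x := by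
          simpa using ((hasDerivAt_id x).const_mul 2).add_const c
        exact (Real.hasDerivAt_rpow_const (p := h) (x := 2*x + c) (Or.inr hh1.le)).comp x l
      have g0 : HasDerivAt (fun x : ℝ => (2*x) ^ h) (h * (2*x) ^ (h-1) * 2) x := by
        simpa using g 0
      exact (((g d).const_mul 2).sub (g (2*d))).sub g0
    have hmono : MonotoneOn F (Set.Ici 0) := by
      apply monotoneOn_of_deriv_nonneg (convex_Ici 0)
      · exact fun x _ => (hderiv x).continuousAt.continuousWithinAt
      · intro x _
        exact (hderiv x).differentiableAt.differentiableWithinAt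
      · intro x hx
        rw [interior_Ici] at hx
        have hx0 : 0 < x := hx
        rw [(hderiv x).deriv]
        have key := mid_concave (p := h - 1) (by linarith) (by linarith)
          (a := 2*x) (b := 2*x + 2*d) (by linarith) (by linarith)
        have e : (2*x + (2*x + 2*d))/2 = 2*x + d := by ring
        rw [e] at key
        nlinarith [key]
    have hFs := hmono (Set.mem_Ici.2 le_rfl) (Set.mem_Ici.2 hs) hs
    have hF0 : F 0 = 2 * d ^ h - (2*d) ^ h := by
      simp [hF, Real.zero_rpow (by linarith : h ≠ 0)]
    have e2d : (2*d) ^ h = 2 ^ h * d ^ h := Real.mul_rpow (by norm_num) hd0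
    have eFs : F s = 2 * (s + t) ^ h - (2*t) ^ h - (2*s) ^ h := by
      have e1 : 2*s + d = s + t := by rw [hd]; ring
      have e2 : 2*s + 2*d = 2*t := by rw [hd]; ring
      simp only [hF, e1, e2]
    rw [hF0, e2d, eFs] at hFs
    linarith
end

section
/- Let 0 < α < d < 2α and let g : ℝ^d → [0,∞) be measurable with ∫_{ℝ^d} g(z) |z|^{−α} dz < ∞. Then T^{d/α − 3} ∫_{ℝ^d} g(z) |z|^{−2α} (1 − e^{−T|z|^α})² dz → 0 as T → ∞. -/
open MeasureTheory Filter

/-!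
Since `(1 - e^{-x})² ≤ x`, the integrand is at most `T g(z) |z|^{-α}`, so the integral is
`O(T)` and the whole expression is `O(T^{d/α - 2})`, which tends to `0` because `d < 2α`.
-/

lemma one_sub_exp_neg_sq_le {x : ℝ} (hx : 0 ≤ x) : (1 - Real.exp (-x)) ^ 2 ≤ x := by
  have hlow : 1 - x ≤ Real.exp (-x) := by linarith [Real.add_one_le_exp (-x)]
  have hup : Real.exp (-x) ≤ 1 := Real.exp_le_one_iff.mpr (neg_nonpos.mpr hx)
  nlinarith [Real.exp_pos (-x)]

lemma rpow_neg_two_mul_mul_one_sub_exp_sq_le {r α T : ℝ} (hr : 0 ≤ r) (hα : α ≠ 0)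
    (hT : 0 ≤ T) :
    r ^ (-(2 * α)) * (1 - Real.exp (-(T * r ^ α))) ^ 2 ≤ T * r ^ (-α) := calc
  r ^ (-(2 * α)) * (1 - Real.exp (-(T * r ^ α))) ^ 2
      ≤ r ^ (-(2 * α)) * (T * r ^ α) := by
        gcongr
        exact one_sub_exp_neg_sq_le (by positivity)
  _ = T * r ^ (-(2 * α) + α) := by
        rw [Real.rpow_add' hr (by contrapose! hα; linarith)]
        ring
  _ = T * r ^ (-α) := by ring_nf

lemma integral_le_mul_toReal_lintegral {X : Type*} [MeasurableSpace X] {μ : Measure X}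
    {f g : X → ℝ} {c : ℝ} (hc : 0 ≤ c) (hf : ∀ x, 0 ≤ f x) (hfg : ∀ x, f x ≤ c * g x)
    (hg : ∫⁻ x, ENNReal.ofReal (g x) ∂μ ≠ ⊤) :
    ∫ x, f x ∂μ ≤ c * (∫⁻ x, ENNReal.ofReal (g x) ∂μ).toReal := by
  by_cases hfint : Integrable f μ
  · rw [integral_eq_lintegral_of_nonneg_ae (ae_of_all _ hf) hfint.aestronglyMeasurable,
      ← ENNReal.toReal_ofReal hc, ← ENNReal.toReal_mul,
      ← lintegral_const_mul' _ _ ENNReal.ofReal_ne_top]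
    refine ENNReal.toReal_mono ?_ (lintegral_mono fun x => ?_)
    · rw [lintegral_const_mul' _ _ ENNReal.ofReal_ne_top]
      exact ENNReal.mul_ne_top ENNReal.ofReal_ne_top hg
    · rw [← ENNReal.ofReal_mul hc]
      exact ENNReal.ofReal_le_ofReal (hfg x)
  · rw [integral_undef hfint]
    exact mul_nonneg hc ENNReal.toReal_nonneg

lemma tendsto_rpow_mul_of_nonneg_of_le_mul {I : ℝ → ℝ} {p C : ℝ} (hp : p + 1 < 0)
    (hI : ∀ T, 0 ≤ T → 0 ≤ I T ∧ I T ≤ T * C) :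
    Tendsto (fun T => T ^ p * I T) atTop (nhds 0) := by
  have hlim : Tendsto (fun T : ℝ => C * T ^ (p + 1)) atTop (nhds 0) := by
    simpa using (tendsto_rpow_neg_atTop (neg_pos.mpr hp)).const_mul C
  refine tendsto_of_tendsto_of_tendsto_of_le_of_le' tendsto_const_nhds hlim ?_ ?_
  all_goals filter_upwards [eventually_gt_atTop (0 : ℝ)] with T hT
  · exact mul_nonneg (by positivity) (hI T hT.le).1
  · calc T ^ p * I T ≤ T ^ p * (T * C) := by gcongr; exact (hI T hT.le).2
      _ = C * T ^ (p + 1) := by rw [Real.rpow_add_one hT.ne']; ring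

theorem stmt16_general (d : ℕ) (α : ℝ) (hα : 0 < α) (hd2α : (d : ℝ) < 2 * α)
    (g : EuclideanSpace ℝ (Fin d) → ℝ) (hg0 : ∀ z, 0 ≤ g z)
    (hint : ∫⁻ z, ENNReal.ofReal (g z * ‖z‖ ^ (-α)) < ⊤) :
    Tendsto (fun T : ℝ => T ^ ((d : ℝ) / α - 3) *
        ∫ z, g z * ‖z‖ ^ (-(2 * α)) * (1 - Real.exp (-(T * ‖z‖ ^ α))) ^ 2)
      atTop (nhds 0) := by
  have hexp : (d : ℝ) / α - 3 + 1 < 0 := by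
    have : (d : ℝ) / α < 2 := (div_lt_iff₀ hα).mpr (by linarith)
    linarith
  refine tendsto_rpow_mul_of_nonneg_of_le_mul
    (C := (∫⁻ z, ENNReal.ofReal (g z * ‖z‖ ^ (-α))).toReal) hexp fun T hT => ⟨?_, ?_⟩
  · exact integral_nonneg fun z => by have := hg0 z; positivity
  · refine integral_le_mul_toReal_lintegral hT (fun z => by have := hg0 z; positivity)
      (fun z => ?_) hint.ne
    calc g z * ‖z‖ ^ (-(2 * α)) * (1 - Real.exp (-(T * ‖z‖ ^ α))) ^ 2
        = g z * (‖z‖ ^ (-(2 * α)) * (1 - Real.exp (-(T * ‖z‖ ^ α))) ^ 2) := by ring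
      _ ≤ g z * (T * ‖z‖ ^ (-α)) := mul_le_mul_of_nonneg_left
        (rpow_neg_two_mul_mul_one_sub_exp_sq_le (norm_nonneg z) hα.ne' hT) (hg0 z)
      _ = T * (g z * ‖z‖ ^ (-α)) := by ring

theorem stmt16 (d : ℕ) (α : ℝ) (hα : 0 < α) (hαd : α < (d : ℝ)) (hd2α : (d : ℝ) < 2 * α)
    (g : EuclideanSpace ℝ (Fin d) → ℝ) (hg : Measurable g) (hg0 : ∀ z, 0 ≤ g z)
    (hint : ∫⁻ z, ENNReal.ofReal (g z * ‖z‖ ^ (-α)) < ⊤) :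
    Tendsto (fun T : ℝ => T ^ ((d : ℝ) / α - 3) *
        ∫ z, g z * ‖z‖ ^ (-(2 * α)) * (1 - Real.exp (-(T * ‖z‖ ^ α))) ^ 2)
      atTop (nhds 0) :=
  stmt16_general d α hα hd2α g hg0 hint
end
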